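/- arXiv:2307.09925 — 3 statements merged into one kernel-verified Lean document; each statement's English description precedes it below -/
import Mathlib

section
/- For every positive integer n and all a, b ∈ ℕ^n, there exists a polynomial p with rational coefficients and degree at most 2^n − 1 such that v_unsplit^{(n,m)}(a,b) = p(m) for every positive integer m. -/
open scoped BigOperators Classical

namespace GPS

/-! ### Vectors in `ℕ^n`, dominance order, support vectors -/

/-- Partial sum `a 1 + ⋯ + a i` of the first `i` entries of `a ∈ ℕ^n`
(entries indexed by `Fin n`). -/
def psum {n : ℕ} (a : Fin n → ℕ) (i : ℕ) : ℕ :=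
  ∑ k : Fin n, if (k : ℕ) < i then a k else 0

/-- `a` dominates `b`: all partial sums of `a` are at least those of `b`. -/
def Dominates {n : ℕ} (a b : Fin n → ℕ) : Prop :=
  ∀ i : ℕ, psum b i ≤ psum a i

/-- The 0/1 vector `χ(u)` with the same support as `u`. -/
def chi {n : ℕ} (u : Fin n → ℕ) : Fin n → ℕ := fun i => if u i = 0 then 0 else 1

/-- `z(u,w) ≤ z`: `u ⊵ w`, `χ(u) ⊵ χ(w)`, and the zeros of `u` can be matched
injectively to zeros of `w`, each zero position `i` of `u` matched to a zero
position `j` of `w` with `j ≤ i ≤ j + z`.  (This is equivalent to the greedy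
matching `M` of the zeros having `i - j ≤ z` for all `(i,j) ∈ M`.)
In particular `DomZle 1 u w` is the relation `u ⊵₁ w`. -/
def DomZle {n : ℕ} (z : ℕ) (u w : Fin n → ℕ) : Prop :=
  Dominates u w ∧ Dominates (chi u) (chi w) ∧
  ∃ φ : Fin n → Fin n, Set.InjOn φ { i | u i = 0 } ∧
    ∀ i, u i = 0 → w (φ i) = 0 ∧ (φ i : ℕ) ≤ (i : ℕ) ∧ (i : ℕ) ≤ (φ i : ℕ) + z

/-! ### The grid graph `G(n,m)` and its flow polytope -/

/-- Vertices of the graph `G(n,m)`: the grid vertices `(i,j)` for `1 ≤ i ≤ n`,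
`0 ≤ j ≤ m` (encoded as `some (i,j)` with `i : Fin n`, `j : Fin (m+1)`)
together with the sink `s` (encoded as `none`). -/
abbrev Vtx (n m : ℕ) := Option (Fin n × Fin (m + 1))

/-- Edges of `G(n,m)`: horizontal edges `(i,j) → (i,j+1)`, vertical edges
`(i,j) → (i+1,j)`, and the edges `(n,j) → s`. -/
def IsEdge (n m : ℕ) : Vtx n m → Vtx n m → Prop
  | some (i, j), some (i', j') =>
      (i = i' ∧ (j' : ℕ) = (j : ℕ) + 1) ∨ ((i' : ℕ) = (i : ℕ) + 1 ∧ j = j')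
  | some (i, _), none => (i : ℕ) = n - 1
  | none, _ => False

/-- The netflow vector for `F_{G(n,m)}(a,b)`: vertex `(i,0)` has netflow `a i`,
vertex `(i,m)` has netflow `-b i`, interior vertices have netflow `0`, and
the sink has netflow `-∑ (a i - b i)`. -/
noncomputable def netflow (n m : ℕ) (a b : Fin n → ℕ) : Vtx n m → ℝ
  | some (i, j) =>
      (if (j : ℕ) = 0 then (a i : ℝ) else 0) - (if (j : ℕ) = m then (b i : ℝ) else 0)
  | none => -∑ i : Fin n, ((a i : ℝ) - (b i : ℝ))

/-- The flow polytope `F_{G(n,m)}(a,b)`: nonnegative functions on the edges of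
`G(n,m)` (encoded as functions on pairs of vertices vanishing off the edges)
with outflow minus inflow equal to the netflow at every vertex. -/
def FlowPolytope (n m : ℕ) (a b : Fin n → ℕ) : Set (Vtx n m → Vtx n m → ℝ) :=
  { f | (∀ u v, ¬ IsEdge n m u v → f u v = 0) ∧
        (∀ u v, 0 ≤ f u v) ∧
        (∀ u, (∑ v, f u v) - (∑ v, f v u) = netflow n m a b u) }

/-- An integer flow: a flow taking integer values on all edges. -/
def IsIntegerFlow {n m : ℕ} (f : Vtx n m → Vtx n m → ℝ) : Prop :=
  ∀ u v, ∃ z : ℤ, f u v = z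

/-- `x` is an extreme point (vertex) of `P`: `x ∈ P` and `x` is not the midpoint
of two distinct points of `P`. -/
def IsExtremePt {E : Type*} [AddCommGroup E] [Module ℝ E] (P : Set E) (x : E) : Prop :=
  x ∈ P ∧ ∀ y ∈ P, ∀ z ∈ P, x = (2 : ℝ)⁻¹ • (y + z) → y = z

/-- An unsplittable flow: each vertex has at most one outgoing edge with positive
flow, and no vertex with negative netflow has positive flow on an outgoing edge. -/
def IsUnsplittable (n m : ℕ) (a b : Fin n → ℕ) (f : Vtx n m → Vtx n m → ℝ) : Prop :=
  (∀ u v w, 0 < f u v → 0 < f u w → v = w) ∧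
  (∀ u, netflow n m a b u < 0 → ∀ v, f u v = 0)

/-- The number of vertices (extreme points) of `F_{G(n,m)}(a,b)`,
denoted `v^{(n,m)}(a,b)`. -/
noncomputable def numVertices (n m : ℕ) (a b : Fin n → ℕ) : ℕ :=
  Set.ncard { f | IsExtremePt (FlowPolytope n m a b) f }

/-- The number of unsplittable integer flows in `F_{G(n,m)}(a,b)`,
denoted `v_unsplit^{(n,m)}(a,b)`. -/
noncomputable def vUnsplit (n m : ℕ) (a b : Fin n → ℕ) : ℕ :=
  Set.ncard { f | f ∈ FlowPolytope n m a b ∧ IsIntegerFlow f ∧ IsUnsplittable n m a b f }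

end GPS
/-! ### Skew shapes and plane partitions -/

namespace GPS

/-- The partition `λ(a) = (a_1+⋯+a_n, …, a_1+a_2, a_1)`, with rows indexed
`1,…,n` (so `lamOf n a i = a_1 + ⋯ + a_{n+1-i}`). -/
def lamOf (n : ℕ) (a : Fin n → ℕ) : ℕ → ℕ := fun i => psum a (n + 1 - i)

/-- `(i,j)` is a cell of the skew shape `λ/μ` (with `n` rows, rows and columns
indexed from 1): `1 ≤ i ≤ n` and `μ_i < j ≤ λ_i`. -/
def IsCellOf (n : ℕ) (lam mu : ℕ → ℕ) (i j : ℕ) : Prop :=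
  1 ≤ i ∧ i ≤ n ∧ mu i < j ∧ j ≤ lam i

/-- A plane partition of skew shape `λ/μ` with entries in `{0,1,…,m}`:
an array vanishing outside the shape, with entries at most `m`, weakly
decreasing along rows and columns. -/
def IsSkewPP (n m : ℕ) (lam mu : ℕ → ℕ) (π : ℕ → ℕ → ℕ) : Prop :=
  (∀ i j, ¬ IsCellOf n lam mu i j → π i j = 0) ∧
  (∀ i j, IsCellOf n lam mu i j → π i j ≤ m) ∧
  (∀ i j, IsCellOf n lam mu i j → IsCellOf n lam mu i (j + 1) → π i (j + 1) ≤ π i j) ∧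
  (∀ i j, IsCellOf n lam mu i j → IsCellOf n lam mu (i + 1) j → π (i + 1) j ≤ π i j)

/-- The conjugate partition: `conjOf n λ j = #{1 ≤ i ≤ n : λ_i ≥ j}`. -/
def conjOf (n : ℕ) (lam : ℕ → ℕ) (j : ℕ) : ℕ :=
  ((Finset.Icc 1 n).filter fun i => j ≤ lam i).card

/-- A vertex plane partition of shape `λ/μ` with entries at most `m`
(Definition 4.5 of the paper). -/
def IsVertexPP (n m : ℕ) (lam mu : ℕ → ℕ) (π : ℕ → ℕ → ℕ) : Prop :=
  IsSkewPP n m lam mu π ∧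
  ∀ j : ℕ, 1 ≤ j →
    conjOf n mu j < conjOf n lam j → conjOf n mu (j + 1) < conjOf n lam (j + 1) →
    -- (i) `μ'_j = μ'_{j+1}` and `λ'_j = λ'_{j+1}`
    ((conjOf n mu j = conjOf n mu (j + 1) ∧ conjOf n lam j = conjOf n lam (j + 1) →
        ∀ i, π i j = π i (j + 1)) ∧
     -- (ii) `μ'_j = μ'_{j+1}` and `λ'_j > λ'_{j+1}`
     (conjOf n mu j = conjOf n mu (j + 1) ∧ conjOf n lam (j + 1) < conjOf n lam j →
        (∀ i, conjOf n mu (j + 1) + 2 ≤ i → i ≤ conjOf n lam (j + 1) →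
          π i j = π i (j + 1) → π (i - 1) j = π (i - 1) (j + 1)) ∧
        (∀ i, conjOf n mu (j + 1) + 1 ≤ i → i ≤ conjOf n lam (j + 1) →
          π i (j + 1) < π (i + 1) j ∨ π i (j + 1) = π i j)) ∧
     -- (iii) `λ'_j = λ'_{j+1}` and `μ'_j > μ'_{j+1}`
     (conjOf n lam j = conjOf n lam (j + 1) ∧ conjOf n mu (j + 1) < conjOf n mu j →
        (∀ i, conjOf n mu j + 1 ≤ i → i ≤ conjOf n lam j - 1 →
          π i j = π i (j + 1) → π (i + 1) j = π (i + 1) (j + 1)) ∧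
        (∀ i, conjOf n mu j ≤ i → i ≤ conjOf n lam j - 1 →
          π i (j + 1) < π (i + 1) j ∨ π (i + 1) j = π (i + 1) (j + 1))) ∧
     -- (iv) `μ'_j ≠ μ'_{j+1}` and `λ'_j ≠ λ'_{j+1}`
     (conjOf n mu j ≠ conjOf n mu (j + 1) ∧ conjOf n lam j ≠ conjOf n lam (j + 1) →
        ∀ imin imax : ℕ,
          ((IsCellOf n lam mu imin j ∧ IsCellOf n lam mu (imin - 1) (j + 1) ∧
              π imin j ≤ π (imin - 1) (j + 1)) ∧
            (∀ i, (IsCellOf n lam mu i j ∧ IsCellOf n lam mu (i - 1) (j + 1) ∧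
              π i j ≤ π (i - 1) (j + 1)) → imin ≤ i)) →
          ((IsCellOf n lam mu (imax + 1) j ∧ IsCellOf n lam mu imax (j + 1) ∧
              π (imax + 1) j ≤ π imax (j + 1)) ∧
            (∀ i, (IsCellOf n lam mu (i + 1) j ∧ IsCellOf n lam mu i (j + 1) ∧
              π (i + 1) j ≤ π i (j + 1)) → i ≤ imax)) →
          imin < imax → ∀ i, imin ≤ i → i ≤ imax → π i j = π i (j + 1)))

end GPS
/-! ### The graph `H_⊤(n)`, the matrix `A_n`, and general flow polytopes -/

namespace GPS

/-- Vertices of `H_⊤(n)`: `(i,-1), (i,0), (i,1)` for `1 ≤ i ≤ n` (encoded as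
`some (i,j)` with `j : Fin 3` standing for levels `-1, 0, 1`) and a sink `s`
(encoded as `none`). -/
abbrev HVtx (n : ℕ) := Option (Fin n × Fin 3)

/-- Edges of `H_⊤(n)`: `(i,-1) → (i,0)`, `(i,0) → (i,1)`, `(i,0) → (i+1,0)`,
and `(n,0) → s`. -/
def HIsEdge (n : ℕ) : HVtx n → HVtx n → Prop
  | some (i, j), some (i', j') =>
      (i = i' ∧ (j' : ℕ) = (j : ℕ) + 1) ∨
      ((j : ℕ) = 1 ∧ (j' : ℕ) = 1 ∧ (i' : ℕ) = (i : ℕ) + 1)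
  | some (i, j), none => (j : ℕ) = 1 ∧ (i : ℕ) = n - 1
  | none, _ => False

/-- The netflows for `F_{H_⊤(n)}(a,b)`: `(i,-1)` has netflow `a i`, `(i,1)` has
netflow `-b i`, `(i,0)` has netflow `0`, and the sink has `-∑ (a i - b i)`. -/
noncomputable def Hnetflow (n : ℕ) (a b : Fin n → ℕ) : HVtx n → ℝ
  | some (i, j) =>
      (if (j : ℕ) = 0 then (a i : ℝ) else 0) - (if (j : ℕ) = 2 then (b i : ℝ) else 0)
  | none => -∑ i : Fin n, ((a i : ℝ) - (b i : ℝ))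

/-- The flow polytope `F_{H_⊤(n)}(a,b)`. -/
def FHtop (n : ℕ) (a b : Fin n → ℕ) : Set (HVtx n → HVtx n → ℝ) :=
  { f | (∀ u v, ¬ HIsEdge n u v → f u v = 0) ∧
        (∀ u v, 0 ≤ f u v) ∧
        (∀ u, (∑ v, f u v) - (∑ v, f v u) = Hnetflow n a b u) }

/-- An unsplittable flow on `H_⊤(n)`. -/
def HUnsplittable (n : ℕ) (a b : Fin n → ℕ) (f : HVtx n → HVtx n → ℝ) : Prop :=
  (∀ u v w, 0 < f u v → 0 < f u w → v = w) ∧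
  (∀ u, Hnetflow n a b u < 0 → ∀ v, f u v = 0)

/-- The `2^n × 2^n` matrix `A_n`, with rows and columns indexed by `{0,1}^n`,
whose `(j,k)` entry is `1` if `j ⊵₁ k` and `0` otherwise. -/
noncomputable def An (n : ℕ) : Matrix (Fin n → Fin 2) (Fin n → Fin 2) ℤ :=
  Matrix.of fun j k =>
    if DomZle 1 (fun i => (j i : ℕ)) (fun i => (k i : ℕ)) then 1 else 0

/-- The support vector `χ(u)` as an element of `{0,1}^n` (encoded `Fin n → Fin 2`). -/
def chi2 {n : ℕ} (u : Fin n → ℕ) : Fin n → Fin 2 := fun i => if u i = 0 then 0 else 1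

/-- The flow polytope `F_G(c)` of a directed graph on vertex set `Fin (N+1)`
with edge relation `E` and netflow vector `c`. -/
def FlowPolyGen (N : ℕ) (E : Fin (N + 1) → Fin (N + 1) → Prop)
    (c : Fin (N + 1) → ℤ) : Set (Fin (N + 1) → Fin (N + 1) → ℝ) :=
  { f | (∀ u v, ¬ E u v → f u v = 0) ∧
        (∀ u v, 0 ≤ f u v) ∧
        (∀ u, (∑ v, f u v) - (∑ v, f v u) = (c u : ℝ)) }

end GPS

/-!
An unsplittable integer flow on `G(n,m)` is determined by the vectors `c_j ∈ ℕ^n` of flow entering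
column `j` from the left, with `c_0 = a` and `c_{m+1} = b`. Conservation forces the flow leaving
`(i,j)` downwards to be `psum c_j (i+1) - psum c_{j+1} (i+1)`, and unsplittability says exactly
that it vanishes whenever `c_{j+1}` is nonzero in row `i`. So `v_unsplit^{(n,m)}(a,b)` counts walks
of length `m+1` from `a` to `b` for a reflexive relation on a finite set of vectors, i.e. it is an
entry of `A^{m+1}` for the 0/1 matrix `A` of that relation. A non-loop step strictly lowers the
support `χ(c)` in the dominance order on `{0,1}^n`, so `A - 1` is nilpotent of index at most `2^n`,
and `A^L = ∑_{k < 2^n} (L choose k) (A - 1)^k` is a polynomial in `L` of degree at most `2^n - 1`.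
-/

open Finset Polynomial

/-! ### Counting walks with a transfer matrix -/

theorem pow_eq_sum_choose_nsmul_of_sub_one_pow_eq_zero {R : Type*} [Ring R] {a : R} {r : ℕ}
    (h : (a - 1) ^ r = 0) (L : ℕ) :
    a ^ L = ∑ k ∈ range r, L.choose k • (a - 1) ^ k := by
  have hexp : a ^ L = ∑ k ∈ range (L + 1), L.choose k • (a - 1) ^ k := by
    conv_lhs => rw [← sub_add_cancel a 1, (Commute.one_right (a - 1)).add_pow]
    exact sum_congr rfl fun k _ => by rw [one_pow, mul_one, nsmul_eq_mul']
  rw [hexp]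
  rcases le_total (L + 1) r with hle | hle
  · refine sum_subset (range_subset_range.2 hle) fun k _ hk => ?_
    rw [Nat.choose_eq_zero_of_lt (by simpa using hk), zero_smul]
  · refine (sum_subset (range_subset_range.2 hle) fun k _ hk => ?_).symm
    rw [pow_eq_zero_of_le (by simpa using hk) h, smul_zero]

theorem exists_polynomial_eval_eq_choose (K : Type*) [Field K] [CharZero K] (k : ℕ) :
    ∃ p : K[X], p.natDegree ≤ k ∧ ∀ L : ℕ, p.eval (L : K) = L.choose k := by
  refine ⟨C (k.factorial : K)⁻¹ * descPochhammer K k,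
    (natDegree_C_mul_le _ _).trans (descPochhammer_natDegree K k).le, fun L => ?_⟩
  rw [eval_mul, eval_C, descPochhammer_eval_eq_descFactorial,
    Nat.descFactorial_eq_factorial_mul_choose, Nat.cast_mul,
    inv_mul_cancel_left₀ (Nat.cast_ne_zero.2 k.factorial_ne_zero)]

namespace Matrix

variable {ι : Type*} [Fintype ι] [DecidableEq ι]

theorem height_add_le_of_pow_apply_ne_zero {R : Type*} [Semiring R] {N : Matrix ι ι R}
    {height : ι → ℕ} (hN : ∀ x y, N x y ≠ 0 → height y < height x) (k : ℕ) {x y : ι}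
    (h : (N ^ k) x y ≠ 0) : height y + k ≤ height x := by
  induction k generalizing y with
  | zero =>
    obtain rfl : x = y := by_contra fun hxy => h (by rw [pow_zero, one_apply_ne hxy])
    omega
  | succ k ih =>
    rw [pow_succ, mul_apply] at h
    obtain ⟨z, -, hz⟩ := exists_ne_zero_of_sum_ne_zero h
    have := ih (left_ne_zero_of_mul hz)
    have := hN z y (right_ne_zero_of_mul hz)
    omega

theorem pow_eq_zero_of_height_lt {R : Type*} [Semiring R] {N : Matrix ι ι R}
    {height : ι → ℕ} (hN : ∀ x y, N x y ≠ 0 → height y < height x) {r : ℕ}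
    (hr : ∀ x, height x < r) : N ^ r = 0 := by
  ext x y
  by_contra h
  have := height_add_le_of_pow_apply_ne_zero hN r h
  have := hr x
  omega

theorem exists_polynomial_pow_apply {K : Type*} [Field K] [CharZero K] {A : Matrix ι ι K} {r : ℕ}
    (h : (A - 1) ^ r = 0) (x y : ι) :
    ∃ p : K[X], p.natDegree ≤ r - 1 ∧ ∀ L : ℕ, (A ^ L) x y = p.eval (L : K) := by
  choose q hq_deg hq using exists_polynomial_eval_eq_choose K
  refine ⟨∑ k ∈ range r, C (((A - 1) ^ k) x y) * q k, natDegree_sum_le_of_forall_le _ _ ?_, ?_⟩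
  · intro k hk
    exact (natDegree_C_mul_le _ _).trans ((hq_deg k).trans (by simp at hk; omega))
  · intro L
    rw [pow_eq_sum_choose_nsmul_of_sub_one_pow_eq_zero h, sum_apply, eval_finsetSum]
    refine sum_congr rfl fun k _ => ?_
    rw [eval_mul, eval_C, hq, smul_apply, nsmul_eq_mul']

end Matrix

section Walks

variable {α : Type*} (R : α → α → Prop)

def paddedWalks (L : ℕ) (x y : α) : Set (ℕ → α) :=
  {c | c 0 = x ∧ (∀ j, R (c j) (c (j + 1))) ∧ ∀ j, L ≤ j → c j = y}

noncomputable def relMatrix (S : Finset α) : Matrix S S ℚ :=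
  Matrix.of fun u v => if R u v then 1 else 0

variable {R}

theorem paddedWalks_zero (hR : ∀ x, R x x) (x y : α) :
    paddedWalks R 0 x y = if x = y then {fun _ => y} else ∅ := by
  ext c
  split_ifs with hxy
  · subst hxy
    refine ⟨fun hc => funext fun j => hc.2.2 j j.zero_le, ?_⟩
    rintro rfl
    exact ⟨rfl, fun _ => hR x, fun _ _ => rfl⟩
  · exact ⟨fun hc => hxy (hc.1.symm.trans (hc.2.2 0 le_rfl)), False.elim⟩

theorem paddedWalks_succ_filter (L : ℕ) (x y z : α) :
    {c ∈ paddedWalks R (L + 1) x y | c 1 = z} =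
      if R x z then (fun d j => if j = 0 then x else d (j - 1)) '' paddedWalks R L z y
      else ∅ := by
  ext c
  split_ifs with hxz
  · constructor
    · rintro ⟨⟨h0, hstep, hpad⟩, h1⟩
      refine ⟨fun j => c (j + 1), ⟨h1, fun j => hstep (j + 1), fun j hj => hpad _ (by omega)⟩, ?_⟩
      funext j
      rcases j with _ | j
      · exact h0.symm
      · simp
    · rintro ⟨d, ⟨h0, hstep, hpad⟩, rfl⟩
      refine ⟨⟨rfl, fun j => ?_, fun j hj => ?_⟩, by simpa using h0⟩
      · rcases j with _ | j
        · simpa [h0] using hxz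
        · simpa using hstep j
      · simpa [show j ≠ 0 by omega] using hpad (j - 1) (by omega)
  · simp only [Set.mem_ofPred_eq, Set.mem_empty_iff_false, iff_false, not_and]
    rintro ⟨h0, hstep, -⟩ rfl
    exact hxz (h0 ▸ hstep 0)

theorem paddedWalks_finite_and_ncard_eq (hR : ∀ x, R x x) {S : Finset α}
    (hS : ∀ u v, u ∈ S → R u v → v ∈ S) (L : ℕ) {x y : α} (hx : x ∈ S) (hy : y ∈ S) :
    (paddedWalks R L x y).Finite ∧
      ((paddedWalks R L x y).ncard : ℚ) = (relMatrix R S ^ L) ⟨x, hx⟩ ⟨y, hy⟩ := by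
  induction L generalizing x with
  | zero =>
    rw [paddedWalks_zero hR, pow_zero, Matrix.one_apply]
    split_ifs with h h'
    · simp
    · exact absurd (Subtype.ext h) h'
    · exact absurd (congrArg Subtype.val ‹_›) h
    · simp
  | succ L ih =>
    have hunion :
        paddedWalks R (L + 1) x y = ⋃ z : S, {c ∈ paddedWalks R (L + 1) x y | c 1 = z} := by
      ext c
      simp only [Set.mem_iUnion, Set.mem_ofPred_eq]
      exact ⟨fun hc => ⟨⟨c 1, hS _ _ hx (hc.1 ▸ hc.2.1 0)⟩, hc, rfl⟩, fun ⟨_, hc, _⟩ => hc⟩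
    have hfiber : ∀ z : S, {c ∈ paddedWalks R (L + 1) x y | c 1 = z}.Finite ∧
        ({c ∈ paddedWalks R (L + 1) x y | c 1 = z}.ncard : ℚ) =
          relMatrix R S ⟨x, hx⟩ z * (relMatrix R S ^ L) z ⟨y, hy⟩ := by
      intro z
      rw [paddedWalks_succ_filter, relMatrix, Matrix.of_apply]
      split_ifs with hxz
      · have hinj : Function.Injective fun (d : ℕ → α) j => if j = 0 then x else d (j - 1) :=
          fun d d' h => funext fun j => by simpa using congrFun h (j + 1)
        rw [Set.ncard_image_of_injective _ hinj, one_mul]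
        exact ⟨(ih z.2).1.image _, (ih z.2).2⟩
      · simp
    rw [hunion, Set.ncard_iUnion_of_finite (fun z => (hfiber z).1), finsum_eq_sum_of_fintype,
      pow_succ', Matrix.mul_apply, Nat.cast_sum]
    refine ⟨Set.finite_iUnion fun z => (hfiber z).1, sum_congr rfl fun z _ => (hfiber z).2⟩
    exact fun z z' hzz' =>
      Set.disjoint_left.2 fun c hc hc' => hzz' (Subtype.ext (hc.2.symm.trans hc'.2))

theorem relMatrix_sub_one_pow_eq_zero (hR : ∀ x, R x x) (S : Finset α) {height : α → ℕ}
    (hheight : ∀ u v, R u v → u ≠ v → height v < height u) {r : ℕ} (hr : ∀ u, height u < r) :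
    (relMatrix R S - 1) ^ r = 0 := by
  refine Matrix.pow_eq_zero_of_height_lt (height := fun u : S => height u) (fun u v huv => ?_)
    fun u => hr u
  by_cases h : u = v
  · subst h
    simp [relMatrix, hR] at huv
  · simp only [relMatrix, Matrix.sub_apply, Matrix.of_apply, Matrix.one_apply_ne h, sub_zero] at huv
    exact hheight u v (by_contra fun h' => huv (if_neg h')) fun h' => h (Subtype.ext h')

theorem exists_polynomial_ncard_paddedWalks (hR : ∀ x, R x x) {S : Finset α}
    (hS : ∀ u v, u ∈ S → R u v → v ∈ S) {x y : α} (hx : x ∈ S) (hy : y ∈ S) {height : α → ℕ}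
    (hheight : ∀ u v, R u v → u ≠ v → height v < height u) {r : ℕ} (hr : ∀ u, height u < r) :
    ∃ p : ℚ[X], p.natDegree ≤ r - 1 ∧
      ∀ L : ℕ, ((paddedWalks R L x y).ncard : ℚ) = p.eval (L : ℚ) := by
  obtain ⟨p, hdeg, hp⟩ := Matrix.exists_polynomial_pow_apply
    (relMatrix_sub_one_pow_eq_zero hR S hheight hr) ⟨x, hx⟩ ⟨y, hy⟩
  exact ⟨p, hdeg, fun L => (paddedWalks_finite_and_ncard_eq hR hS L hx hy).2.trans (hp L)⟩

end Walks

namespace GPS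

/-! ### The step relation between consecutive column inflows -/

variable {n : ℕ}

theorem psum_zero (u : Fin n → ℕ) : psum u 0 = 0 := by simp [psum]

theorem psum_succ (u : Fin n → ℕ) {i : ℕ} (h : i < n) :
    psum u (i + 1) = psum u i + u ⟨i, h⟩ := by
  rw [psum, psum, ← Fintype.sum_ite_eq' (⟨i, h⟩ : Fin n) u, ← sum_add_distrib]
  refine sum_congr rfl fun k _ => ?_
  simp only [Fin.ext_iff]
  split_ifs <;> omega

theorem psum_of_le (u : Fin n → ℕ) {i : ℕ} (h : n ≤ i) : psum u i = ∑ k, u k :=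
  sum_congr rfl fun k _ => if_pos (k.isLt.trans_le h)

theorem eq_of_psum_eq {x y : Fin n → ℕ} (h : ∀ i, psum x i = psum y i) : x = y := by
  funext k
  have := h (k + 1)
  rw [psum_succ x k.isLt, psum_succ y k.isLt, h k] at this
  simpa using this

theorem Dominates.trans {x y z : Fin n → ℕ} (hxy : Dominates x y) (hyz : Dominates y z) :
    Dominates x z :=
  fun i => (hyz i).trans (hxy i)

theorem Dominates.antisymm {x y : Fin n → ℕ} (hxy : Dominates x y) (hyx : Dominates y x) :
    x = y :=
  eq_of_psum_eq fun i => le_antisymm (hyx i) (hxy i)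

theorem dominates_of_psum_succ_le {x y : Fin n → ℕ}
    (h : ∀ i : Fin n, psum y (i + 1) ≤ psum x (i + 1)) : Dominates x y := by
  intro i
  rcases i with _ | i
  · simp [psum_zero]
  · by_cases hi : i < n
    · exact h ⟨i, hi⟩
    · rw [psum_of_le _ (by omega : n ≤ i + 1), psum_of_le _ (by omega : n ≤ i + 1)]
      rcases n with _ | n
      · simp
      · simpa [psum_of_le] using h (Fin.last n)

/-- The relation between the inflows `c_j` and `c_{j+1}` of consecutive columns of an unsplittable
flow: the downward flows `psum c_j - psum c_{j+1}` are nonnegative and vanish in every row where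
`c_{j+1}` carries flow. -/
def UnsplitStep (x y : Fin n → ℕ) : Prop :=
  Dominates x y ∧ ∀ i : Fin n, y i ≠ 0 → psum y (i + 1) = psum x (i + 1)

theorem UnsplitStep.refl (x : Fin n → ℕ) : UnsplitStep x x :=
  ⟨fun _ => le_rfl, fun _ _ => rfl⟩

theorem UnsplitStep.psum_chi {x y : Fin n → ℕ} (h : UnsplitStep x y) (i : ℕ) :
    psum (chi y) i ≤ psum (chi x) i ∧
      (psum (chi y) i = psum (chi x) i → psum y i = psum x i) := by
  induction i with
  | zero => simp [psum_zero]
  | succ i ih =>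
    by_cases hi : i < n
    · have hstep := h.2 ⟨i, hi⟩
      have hdom := h.1 i
      rw [psum_succ _ hi, psum_succ _ hi] at hstep ⊢
      rw [psum_succ _ hi, psum_succ _ hi]
      by_cases hy : y ⟨i, hi⟩ = 0 <;> by_cases hx : x ⟨i, hi⟩ = 0 <;>
        simp only [chi, hx, hy, if_true, if_false] at hstep ⊢ <;> omega
    · have hconst (u : Fin n → ℕ) : psum u (i + 1) = psum u i := by
        rw [psum_of_le u (by omega), psum_of_le u (by omega)]
      simpa only [hconst] using ih

theorem UnsplitStep.dominates_chi {x y : Fin n → ℕ} (h : UnsplitStep x y) :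
    Dominates (chi x) (chi y) :=
  fun i => (h.psum_chi i).1

theorem UnsplitStep.eq_of_chi_eq {x y : Fin n → ℕ} (h : UnsplitStep x y) (hchi : chi x = chi y) :
    x = y :=
  eq_of_psum_eq fun i => ((h.psum_chi i).2 (by rw [hchi])).symm

def binaryVectors (n : ℕ) : Finset (Fin n → ℕ) := Fintype.piFinset fun _ => range 2

theorem chi_mem_binaryVectors (x : Fin n → ℕ) : chi x ∈ binaryVectors n := by
  simp only [binaryVectors, Fintype.mem_piFinset, mem_range, chi]
  intro k
  split_ifs <;> omega

noncomputable def supportHeight (x : Fin n → ℕ) : ℕ :=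
  #{w ∈ binaryVectors n | Dominates (chi x) w ∧ w ≠ chi x}

theorem supportHeight_lt_two_pow (x : Fin n → ℕ) : supportHeight x < 2 ^ n := by
  calc supportHeight x < #(binaryVectors n) :=
        card_lt_card (filter_ssubset.2 ⟨chi x, chi_mem_binaryVectors x, fun h => h.2 rfl⟩)
    _ = 2 ^ n := by simp [binaryVectors]

theorem UnsplitStep.supportHeight_lt {x y : Fin n → ℕ} (h : UnsplitStep x y) (hne : x ≠ y) :
    supportHeight y < supportHeight x := by
  have hchi : chi y ≠ chi x := fun e => hne (h.eq_of_chi_eq e.symm)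
  refine card_lt_card ⟨fun w hw => ?_, fun hsub => ?_⟩
  · simp only [mem_filter] at hw ⊢
    refine ⟨hw.1, h.dominates_chi.trans hw.2.1, fun e => hw.2.2 ?_⟩
    subst e
    exact (hw.2.1.antisymm h.dominates_chi).symm
  · have := hsub (mem_filter.2 ⟨chi_mem_binaryVectors y, h.dominates_chi, hchi⟩)
    exact (mem_filter.1 this).2.2 rfl

def boundedVectors (n s : ℕ) : Finset (Fin n → ℕ) :=
  {u ∈ Fintype.piFinset fun _ => range (s + 1) | ∑ k, u k ≤ s}

theorem mem_boundedVectors {s : ℕ} {u : Fin n → ℕ} : u ∈ boundedVectors n s ↔ ∑ k, u k ≤ s := by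
  simp only [boundedVectors, mem_filter, Fintype.mem_piFinset, mem_range, and_iff_right_iff_imp]
  exact fun hu k =>
    Nat.lt_succ_of_le ((single_le_sum (fun _ _ => Nat.zero_le _) (mem_univ k)).trans hu)

theorem UnsplitStep.mem_boundedVectors {s : ℕ} {x y : Fin n → ℕ} (h : UnsplitStep x y)
    (hx : x ∈ boundedVectors n s) : y ∈ boundedVectors n s := by
  rw [GPS.mem_boundedVectors, ← psum_of_le x le_rfl] at hx
  rw [GPS.mem_boundedVectors, ← psum_of_le y le_rfl]
  exact (h.1 n).trans hx

theorem exists_polynomial_ncard_paddedWalks_unsplitStep (a b : Fin n → ℕ) :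
    ∃ p : ℚ[X], p.natDegree ≤ 2 ^ n - 1 ∧
      ∀ L : ℕ, ((paddedWalks UnsplitStep L a b).ncard : ℚ) = p.eval (L : ℚ) :=
  exists_polynomial_ncard_paddedWalks UnsplitStep.refl (fun _ _ hu h => h.mem_boundedVectors hu)
    (mem_boundedVectors.2 (Nat.le_add_right _ (∑ k, b k)))
    (mem_boundedVectors.2 (Nat.le_add_left _ (∑ k, a k)))
    (fun _ _ h hne => h.supportHeight_lt hne) supportHeight_lt_two_pow

theorem eq_psum_sub_psum_iff {D : ℕ → ℝ} {x y : Fin n → ℕ} :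
    (∀ i : Fin n, D i = psum x (i + 1) - psum y (i + 1)) ↔
      ∀ i : Fin n, D i - (if 0 < (i : ℕ) then D (i - 1) else 0) = x i - y i := by
  constructor
  · intro h i
    rw [h i, psum_succ x i.isLt, psum_succ y i.isLt]
    simp only [Fin.eta]
    rcases Nat.eq_zero_or_pos i with hi | hi
    · simp [hi, psum_zero]
    · have := h ⟨i - 1, by omega⟩
      simp only [Nat.sub_add_cancel hi] at this
      simp only [hi, if_true, this]
      push_cast
      ring
  · intro h
    suffices ∀ k (hk : k < n), D k = psum x (k + 1) - psum y (k + 1) from fun i => this i i.isLt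
    intro k hk
    induction k with
    | zero => simpa [psum_succ x hk, psum_succ y hk, psum_zero] using h ⟨0, hk⟩
    | succ k ih =>
      have := h ⟨k + 1, hk⟩
      simp only [k.succ_pos, if_true, Nat.add_sub_cancel, ih (by omega)] at this
      rw [psum_succ x hk, psum_succ y hk]
      push_cast
      linarith

/-! ### Unsplittable flows on `G(n,m)` as walks -/

theorem _root_.Fin.sum_ite_val_eq {M : Type*} [AddCommMonoid M] {k : ℕ} (t : ℕ) (g : ℕ → M) :
    (∑ x : Fin k, if (x : ℕ) = t then g x else 0) = if t < k then g t else 0 := by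
  rw [Fin.sum_univ_eq_sum_range (fun x => if x = t then g x else 0), Finset.sum_ite_eq']
  simp

theorem _root_.Fin.sum_ite_eq_val_add_one {M : Type*} [AddCommMonoid M] {k : ℕ} (t : ℕ) (g : ℕ → M) :
    (∑ x : Fin k, if t = (x : ℕ) + 1 then g x else 0) = if 0 < t ∧ t ≤ k then g (t - 1) else 0 := by
  rw [Fin.sum_univ_eq_sum_range (fun x => if t = x + 1 then g x else 0)]
  rcases t with _ | t
  · simp
  · simp [Finset.sum_ite_eq]

variable {m : ℕ}

/-- `H i j` is the flow on the horizontal edge entering `(i,j)`, and `D i j` the flow on the edge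
leaving `(i,j)` downwards (into the sink from the last row). -/
def gridFlow (m : ℕ) (H : Fin n → ℕ → ℝ) (D : ℕ → ℕ → ℝ) : Vtx n m → Vtx n m → ℝ
  | some (i, j), some (i', j') =>
      (if i' = i ∧ (j' : ℕ) = j + 1 then H i j' else 0) +
        (if (i' : ℕ) = i + 1 ∧ j' = j then D i j else 0)
  | some (i, j), none => if (i : ℕ) + 1 = n then D i j else 0
  | none, _ => 0

def below (i : Fin n) (j : Fin (m + 1)) : Vtx n m :=
  if h : (i : ℕ) + 1 < n then some (⟨i + 1, h⟩, j) else none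

section gridFlow

variable {H : Fin n → ℕ → ℝ} {D : ℕ → ℕ → ℝ}

theorem sum_gridFlow_out (i : Fin n) (j : Fin (m + 1)) :
    ∑ v, gridFlow m H D (some (i, j)) v = (if (j : ℕ) < m then H i (j + 1) else 0) + D i j := by
  simp only [Fintype.sum_option, gridFlow, Fintype.sum_prod_type, sum_add_distrib, ite_and,
    sum_ite_irrel, sum_const_zero, sum_ite_eq', mem_univ, if_true,
    Fin.sum_ite_val_eq (g := fun x => H i x), Fin.sum_ite_val_eq (g := fun _ => D i j)]
  have := i.isLt
  split_ifs <;> first | omega | ring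

theorem sum_gridFlow_in (i : Fin n) (j : Fin (m + 1)) :
    ∑ u, gridFlow m H D u (some (i, j)) =
      (if 0 < (j : ℕ) then H i j else 0) + (if 0 < (i : ℕ) then D (i - 1) j else 0) := by
  simp only [Fintype.sum_option, gridFlow, Fintype.sum_prod_type, sum_add_distrib, ite_and,
    sum_ite_irrel, sum_const_zero, sum_ite_eq, mem_univ, if_true,
    Fin.sum_ite_eq_val_add_one (g := fun _ => H i j),
    Fin.sum_ite_eq_val_add_one (g := fun x => D x j)]
  have := i.isLt
  have := j.isLt
  split_ifs <;> first | omega | ring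

theorem gridFlow_eq_zero_of_not_isEdge {u v : Vtx n m} (h : ¬ IsEdge n m u v) :
    gridFlow m H D u v = 0 := by
  rcases u with _ | ⟨i, j⟩
  · rfl
  rcases v with _ | ⟨i', j'⟩
  · simp only [IsEdge] at h
    simp [gridFlow, show (i : ℕ) + 1 ≠ n by omega]
  · simp only [IsEdge, not_or, not_and] at h
    simp only [gridFlow]
    rw [if_neg fun h' => h.1 h'.1.symm h'.2, if_neg fun h' => h.2 h'.1 h'.2.symm, add_zero]

theorem gridFlow_nonneg (hH : ∀ i j, 0 ≤ H i j) (hD : ∀ i j, 0 ≤ D i j) (u v : Vtx n m) :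
    0 ≤ gridFlow m H D u v := by
  rcases u with _ | ⟨i, j⟩
  · exact le_rfl
  rcases v with _ | ⟨i', j'⟩
  · simp only [gridFlow]
    split_ifs <;> linarith [hD i j]
  · simp only [gridFlow]
    split_ifs <;> linarith [hH i j', hD i j]

theorem gridFlow_right (i : Fin n) {j j' : Fin (m + 1)} (hj : (j' : ℕ) = j + 1) :
    gridFlow m H D (some (i, j)) (some (i, j')) = H i j' := by
  simp [gridFlow, hj, Fin.ext_iff]

theorem gridFlow_below (i : Fin n) (j : Fin (m + 1)) :
    gridFlow m H D (some (i, j)) (below i j) = D i j := by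
  unfold below
  split_ifs with h
  · simp [gridFlow, Fin.ext_iff]
  · simp [gridFlow]
    omega

theorem isIntegerFlow_gridFlow (hH : ∀ i j, ∃ z : ℤ, H i j = z) (hD : ∀ i j, ∃ z : ℤ, D i j = z) :
    IsIntegerFlow (gridFlow m H D) := by
  have h0 : ∃ z : ℤ, (0 : ℝ) = z := ⟨0, by simp⟩
  intro u v
  rcases u with _ | ⟨i, j⟩
  · exact h0
  rcases v with _ | ⟨i', j'⟩
  · simp only [gridFlow]
    split_ifs
    exacts [hD i j, h0]
  · obtain ⟨z, hz⟩ := hH i j'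
    obtain ⟨z', hz'⟩ := hD i j
    simp only [gridFlow]
    split_ifs
    exacts [⟨z + z', by push_cast; rw [hz, hz']⟩, ⟨z, by simp [hz]⟩, ⟨z', by simp [hz']⟩,
      ⟨0, by simp⟩]

theorem IsEdge.eq_right_or_eq_below {i : Fin n} {j : Fin (m + 1)} {v : Vtx n m}
    (h : IsEdge n m (some (i, j)) v) :
    (∃ j' : Fin (m + 1), (j' : ℕ) = j + 1 ∧ v = some (i, j')) ∨ v = below i j := by
  rcases v with _ | ⟨i', j'⟩
  · right
    simp only [IsEdge] at h
    simp [below, show ¬ (i : ℕ) + 1 < n by omega]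
  · rcases h with ⟨rfl, hj⟩ | ⟨hi, rfl⟩
    · exact Or.inl ⟨j', hj, rfl⟩
    · right
      simp [below, ← hi]

theorem right_ne_below (i : Fin n) {j j' : Fin (m + 1)} (hj : (j' : ℕ) = j + 1) :
    some (i, j') ≠ below i j := by
  unfold below
  split_ifs <;> simp [Fin.ext_iff, hj]

theorem eq_gridFlow {f : Vtx n m → Vtx n m → ℝ} (hf : ∀ u v, ¬ IsEdge n m u v → f u v = 0)
    (hH : ∀ i (j j' : Fin (m + 1)), (j' : ℕ) = j + 1 → f (some (i, j)) (some (i, j')) = H i j')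
    (hD : ∀ i j, f (some (i, j)) (below i j) = D i j) : f = gridFlow m H D := by
  funext u v
  by_cases he : IsEdge n m u v
  · rcases u with _ | ⟨i, j⟩
    · exact he.elim
    rcases he.eq_right_or_eq_below with ⟨j', hj, rfl⟩ | rfl
    · rw [hH i j j' hj, gridFlow_right i hj]
    · rw [hD, gridFlow_below]
  · rw [hf _ _ he, gridFlow_eq_zero_of_not_isEdge he]

theorem netflow_some_neg_iff (hm : 0 < m) {a b : Fin n → ℕ} (i : Fin n) (j : Fin (m + 1)) :
    netflow n m a b (some (i, j)) < 0 ↔ (j : ℕ) = m ∧ b i ≠ 0 := by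
  simp only [netflow]
  rcases eq_or_ne (j : ℕ) m with hjm | hjm
  · simp [hjm, hm.ne', Nat.pos_iff_ne_zero]
  · simp only [hjm, if_false, sub_zero, false_and, iff_false, not_lt]
    positivity

theorem isUnsplittable_gridFlow_iff (hm : 0 < m) {a b : Fin n → ℕ}
    (hD : ∀ i j, 0 ≤ D i j) :
    IsUnsplittable n m a b (gridFlow m H D) ↔
      (∀ i (j : Fin (m + 1)), (j : ℕ) < m → 0 < H i (j + 1) → D i j = 0) ∧
        ∀ i, b i ≠ 0 → D i m = 0 := by
  constructor
  · rintro ⟨hsplit, hneg⟩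
    refine ⟨fun i j hj hpos => by_contra fun hne => ?_, fun i hb => ?_⟩
    · have hright : (⟨j + 1, by omega⟩ : Fin (m + 1)).val = j + 1 := rfl
      refine right_ne_below i hright (hsplit (some (i, j)) _ _ ?_ ?_)
      · rwa [gridFlow_right i hright]
      · rw [gridFlow_below]
        exact (hD i j).lt_of_ne' hne
    · have := hneg _ ((netflow_some_neg_iff hm i (Fin.last m)).2 ⟨rfl, hb⟩) (below i (Fin.last m))
      rwa [gridFlow_below] at this
  · rintro ⟨hsplit, hneg⟩
    refine ⟨fun u v w hv hw => ?_, fun u hu v => ?_⟩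
    · rcases u with _ | ⟨i, j⟩
      · exact absurd hv (lt_irrefl 0)
      have hedge {v : Vtx n m} (hv : 0 < gridFlow m H D (some (i, j)) v) :=
        (by_contra fun he => hv.ne' (gridFlow_eq_zero_of_not_isEdge he) :
          IsEdge n m (some (i, j)) v).eq_right_or_eq_below
      have hright {j' : Fin (m + 1)} (hj' : (j' : ℕ) = j + 1)
          (hpos : 0 < gridFlow m H D (some (i, j)) (some (i, j'))) :
          ¬ 0 < gridFlow m H D (some (i, j)) (below i j) := by
        rw [gridFlow_right i hj', hj'] at hpos
        rw [gridFlow_below, hsplit i j (by omega) hpos]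
        exact lt_irrefl 0
      rcases hedge hv with ⟨j₁, hj₁, rfl⟩ | rfl <;> rcases hedge hw with ⟨j₂, hj₂, rfl⟩ | rfl
      · rw [Fin.ext (hj₁.trans hj₂.symm)]
      · exact absurd hw (hright hj₁ hv)
      · exact absurd hv (hright hj₂ hw)
      · rfl
    · rcases u with _ | ⟨i, j⟩
      · rfl
      obtain ⟨hjm, hb⟩ := (netflow_some_neg_iff hm i j).1 hu
      by_cases he : IsEdge n m (some (i, j)) v
      · rcases he.eq_right_or_eq_below with ⟨j', hj', rfl⟩ | rfl
        · omega
        · rw [gridFlow_below, hjm, hneg i hb]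
      · exact gridFlow_eq_zero_of_not_isEdge he

theorem gridFlow_conservation_iff (hm : 0 < m) {a b : Fin n → ℕ} {col : ℕ → Fin n → ℝ}
    (hcol0 : ∀ i, col 0 i = a i) (hcolm : ∀ i, col (m + 1) i = b i)
    (hH : ∀ i j, 0 < j → j ≤ m → H i j = col j i) (i : Fin n) (j : Fin (m + 1)) :
    (∑ v, gridFlow m H D (some (i, j)) v) - (∑ u, gridFlow m H D u (some (i, j))) =
        netflow n m a b (some (i, j)) ↔
      D i j - (if 0 < (i : ℕ) then D (i - 1) j else 0) = col j i - col (j + 1) i := by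
  rw [sum_gridFlow_out, sum_gridFlow_in]
  simp only [netflow]
  have hj := j.isLt
  generalize (j : ℕ) = J at hj ⊢
  rcases Nat.eq_zero_or_pos J with rfl | hJ0
  · simp only [hm, hm.ne, if_true, if_false, lt_irrefl, zero_add, hH i 1 one_pos hm, hcol0]
    constructor <;> intro <;> linarith
  · rcases eq_or_lt_of_le (Nat.le_of_lt_succ hj) with rfl | hJm
    · simp only [hJ0, hJ0.ne', lt_irrefl, if_true, if_false, hH i J hJ0 le_rfl, hcolm]
      constructor <;> intro <;> linarith
    · simp only [hJ0, hJ0.ne', hJm, hJm.ne, if_true, if_false, hH i J hJ0 hJm.le,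
        hH i (J + 1) J.succ_pos hJm]
      constructor <;> intro <;> linarith

end gridFlow

theorem sum_netflow_some (a b : Fin n → ℕ) :
    ∑ x, netflow n m a b (some x) = ∑ i, ((a i : ℝ) - b i) := by
  rw [Fintype.sum_prod_type]
  refine sum_congr rfl fun i _ => ?_
  simp only [netflow, sum_sub_distrib, Fin.sum_ite_val_eq (g := fun _ => (a i : ℝ)),
    Fin.sum_ite_val_eq (g := fun _ => (b i : ℝ))]
  simp

theorem conservation_none_of_forall_some {a b : Fin n → ℕ} {f : Vtx n m → Vtx n m → ℝ}
    (h : ∀ x, (∑ v, f (some x) v) - (∑ u, f u (some x)) = netflow n m a b (some x)) :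
    (∑ v, f none v) - (∑ u, f u none) = netflow n m a b none := by
  have htotal : ∑ u, ((∑ v, f u v) - ∑ v, f v u) = 0 := by
    rw [sum_sub_distrib, sum_comm, sub_self]
  rw [Fintype.sum_option, Fintype.sum_congr _ _ h, sum_netflow_some] at htotal
  simp only [netflow]
  linarith


def flowOfChain (m : ℕ) (c : ℕ → Fin n → ℕ) : Vtx n m → Vtx n m → ℝ :=
  gridFlow m (fun i j => c j i) fun i j => (psum (c j) (i + 1) : ℝ) - psum (c (j + 1)) (i + 1)

theorem flowOfChain_mem (hm : 0 < m) {a b : Fin n → ℕ} {c : ℕ → Fin n → ℕ}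
    (hc : c ∈ paddedWalks UnsplitStep (m + 1) a b) :
    flowOfChain m c ∈ FlowPolytope n m a b ∧ IsIntegerFlow (flowOfChain m c) ∧
      IsUnsplittable n m a b (flowOfChain m c) := by
  obtain ⟨hc0, hstep, hpad⟩ := hc
  have hD (i j : ℕ) : (0 : ℝ) ≤ psum (c j) (i + 1) - psum (c (j + 1)) (i + 1) :=
    sub_nonneg.2 (Nat.cast_le.2 ((hstep j).1 (i + 1)))
  have hlocal (x : Fin n × Fin (m + 1)) :
      (∑ v, flowOfChain m c (some x) v) - (∑ u, flowOfChain m c u (some x)) =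
        netflow n m a b (some x) :=
    (gridFlow_conservation_iff hm (col := fun j i => (c j i : ℝ)) (by simp [hc0])
      (by simp [hpad (m + 1) le_rfl]) (fun _ _ _ _ => rfl) x.1 x.2).2
      ((eq_psum_sub_psum_iff (D := fun i => (psum (c x.2) (i + 1) : ℝ) - psum (c (x.2 + 1)) (i + 1))
        (x := c x.2) (y := c (x.2 + 1))).1 (fun _ => rfl) x.1)
  refine ⟨⟨fun u v => gridFlow_eq_zero_of_not_isEdge,
      gridFlow_nonneg (fun _ _ => Nat.cast_nonneg _) hD, fun u => ?_⟩,
    isIntegerFlow_gridFlow (fun i j => ⟨c j i, by simp⟩)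
      (fun i j => ⟨psum (c j) (i + 1) - psum (c (j + 1)) (i + 1), by simp⟩),
    (isUnsplittable_gridFlow_iff hm hD).2 ⟨fun i j _ hpos => ?_, fun i hb => ?_⟩⟩
  · rcases u with _ | x
    exacts [conservation_none_of_forall_some hlocal, hlocal x]
  · rw [(hstep j).2 i (Nat.cast_pos.1 hpos).ne', sub_self]
  · rw [(hstep m).2 i (by rwa [hpad (m + 1) le_rfl]), sub_self]

theorem flowOfChain_injOn {a b : Fin n → ℕ} :
    Set.InjOn (flowOfChain m) (paddedWalks UnsplitStep (m + 1) a b) := by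
  intro c ⟨hc0, _, hcpad⟩ c' ⟨hc0', _, hcpad'⟩ h
  funext j i
  rcases Nat.eq_zero_or_pos j with rfl | hj0
  · rw [hc0, hc0']
  by_cases hjm : j ≤ m
  · have hj : (⟨j, by omega⟩ : Fin (m + 1)).val = (⟨j - 1, by omega⟩ : Fin (m + 1)).val + 1 := by
      simp only; omega
    have := congrFun₂ h (some (i, ⟨j - 1, by omega⟩)) (some (i, ⟨j, by omega⟩))
    rwa [flowOfChain, flowOfChain, gridFlow_right i hj, gridFlow_right i hj, Nat.cast_inj] at this
  · rw [hcpad j (by omega), hcpad' j (by omega)]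

theorem natCast_floor_eq_self {x : ℝ} (hx : ∃ z : ℤ, x = z) (h0 : 0 ≤ x) : (⌊x⌋₊ : ℝ) = x := by
  obtain ⟨z, rfl⟩ := hx
  lift z to ℕ using (by exact_mod_cast h0)
  simp

noncomputable def columnInputs (m : ℕ) (a b : Fin n → ℕ) (f : Vtx n m → Vtx n m → ℝ) :
    ℕ → Fin n → ℕ :=
  fun j i =>
    if j = 0 then a i
    else if h : j ≤ m then ⌊f (some (i, ⟨j - 1, by omega⟩)) (some (i, ⟨j, by omega⟩))⌋₊
    else b i

def downwardFlow (f : Vtx n m → Vtx n m → ℝ) : ℕ → ℕ → ℝ := fun i j =>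
  if h : i < n ∧ j ≤ m then f (some (⟨i, h.1⟩, ⟨j, by omega⟩)) (below ⟨i, h.1⟩ ⟨j, by omega⟩)
  else 0

section columnInputs

variable {a b : Fin n → ℕ} {f : Vtx n m → Vtx n m → ℝ}

theorem columnInputs_zero : columnInputs m a b f 0 = a := by
  funext i
  simp [columnInputs]

theorem columnInputs_of_lt {j : ℕ} (hj : m < j) : columnInputs m a b f j = b := by
  funext i
  simp [columnInputs, show j ≠ 0 by omega, show ¬ j ≤ m by omega]

theorem downwardFlow_apply (i : Fin n) (j : Fin (m + 1)) :
    downwardFlow f i j = f (some (i, j)) (below i j) := by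
  simp [downwardFlow, i.isLt, Nat.le_of_lt_succ j.isLt]

theorem downwardFlow_nonneg (hf : f ∈ FlowPolytope n m a b) (i j : ℕ) : 0 ≤ downwardFlow f i j := by
  unfold downwardFlow
  split_ifs
  exacts [hf.2.1 _ _, le_rfl]

theorem apply_right_eq_columnInputs (hf : f ∈ FlowPolytope n m a b) (hint : IsIntegerFlow f)
    (i : Fin n) {j j' : Fin (m + 1)} (hj : (j' : ℕ) = j + 1) :
    f (some (i, j)) (some (i, j')) = columnInputs m a b f j' i := by
  have hj' : (⟨(j' : ℕ) - 1, by omega⟩ : Fin (m + 1)) = j := Fin.ext (by simp only; omega)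
  simp only [columnInputs, show (j' : ℕ) ≠ 0 by omega, if_false,
    dif_pos (Nat.le_of_lt_succ j'.isLt), hj', Fin.eta]
  exact (natCast_floor_eq_self (hint _ _) (hf.2.1 _ _)).symm

theorem eq_gridFlow_columnInputs (hf : f ∈ FlowPolytope n m a b) (hint : IsIntegerFlow f) :
    f = gridFlow m (fun i j => columnInputs m a b f j i) (downwardFlow f) :=
  eq_gridFlow hf.1 (fun i _ _ hj => apply_right_eq_columnInputs hf hint i hj)
    fun i j => (downwardFlow_apply i j).symm

theorem downwardFlow_eq_psum_sub_psum (hm : 0 < m) (hf : f ∈ FlowPolytope n m a b)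
    (hint : IsIntegerFlow f) (j : Fin (m + 1)) (i : Fin n) :
    downwardFlow f i j = psum (columnInputs m a b f j) (i + 1) -
      psum (columnInputs m a b f (j + 1)) (i + 1) := by
  refine (eq_psum_sub_psum_iff (D := fun i => downwardFlow f i j)).2 (fun i => ?_) i
  have := hf.2.2 (some (i, j))
  rw [eq_gridFlow_columnInputs hf hint] at this
  exact (gridFlow_conservation_iff hm (col := fun j i => (columnInputs m a b f j i : ℝ))
    (by simp [columnInputs_zero]) (by simp [columnInputs_of_lt]) (fun _ _ _ _ => rfl) i j).1 this

theorem flowOfChain_columnInputs (hm : 0 < m) (hf : f ∈ FlowPolytope n m a b)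
    (hint : IsIntegerFlow f) : flowOfChain m (columnInputs m a b f) = f :=
  (eq_gridFlow hf.1 (fun i _ _ hj => apply_right_eq_columnInputs hf hint i hj) fun i j =>
    (downwardFlow_apply i j).symm.trans (downwardFlow_eq_psum_sub_psum hm hf hint j i)).symm

theorem columnInputs_mem_paddedWalks (hm : 0 < m) (hf : f ∈ FlowPolytope n m a b)
    (hint : IsIntegerFlow f) (hun : IsUnsplittable n m a b f) :
    columnInputs m a b f ∈ paddedWalks UnsplitStep (m + 1) a b := by
  have hsplit := (isUnsplittable_gridFlow_iff hm (downwardFlow_nonneg hf)).1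
    (eq_gridFlow_columnInputs hf hint ▸ hun)
  refine ⟨columnInputs_zero, fun j => ?_, fun j hj => columnInputs_of_lt hj⟩
  by_cases hjm : j ≤ m
  · set J : Fin (m + 1) := ⟨j, by omega⟩
    have hD := downwardFlow_eq_psum_sub_psum hm hf hint J
    refine ⟨dominates_of_psum_succ_le fun i => ?_, fun i hi => ?_⟩
    · exact_mod_cast sub_nonneg.1 (hD i ▸ downwardFlow_nonneg hf i j)
    · have hzero : downwardFlow f i j = 0 := by
        rcases lt_or_eq_of_le hjm with hjm | rfl
        · exact hsplit.1 i J hjm (Nat.cast_pos.2 (Nat.pos_of_ne_zero hi))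
        · exact hsplit.2 i (by rwa [columnInputs_of_lt (Nat.lt_succ_self _)] at hi)
      exact_mod_cast (sub_eq_zero.1 ((hD i).symm.trans hzero)).symm
  · rw [columnInputs_of_lt (by omega), columnInputs_of_lt (by omega)]
    exact UnsplitStep.refl b

end columnInputs

theorem vUnsplit_eq_ncard_paddedWalks (hm : 0 < m) (a b : Fin n → ℕ) :
    vUnsplit n m a b = (paddedWalks UnsplitStep (m + 1) a b).ncard := by
  have himage : {f | f ∈ FlowPolytope n m a b ∧ IsIntegerFlow f ∧ IsUnsplittable n m a b f} =
      flowOfChain m '' paddedWalks UnsplitStep (m + 1) a b := by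
    ext f
    constructor
    · rintro ⟨hf, hint, hun⟩
      exact ⟨_, columnInputs_mem_paddedWalks hm hf hint hun, flowOfChain_columnInputs hm hf hint⟩
    · rintro ⟨c, hc, rfl⟩
      exact flowOfChain_mem hm hc
  rw [vUnsplit, himage, flowOfChain_injOn.ncard_image]

theorem statement15_general (n : ℕ) (a b : Fin n → ℕ) :
    ∃ p : Polynomial ℚ, p.natDegree ≤ 2 ^ n - 1 ∧
      ∀ m : ℕ, 0 < m → (vUnsplit n m a b : ℚ) = p.eval (m : ℚ) := by
  obtain ⟨p, hdeg, hp⟩ := exists_polynomial_ncard_paddedWalks_unsplitStep a b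
  refine ⟨p.comp (X + C 1), by rwa [natDegree_comp, natDegree_X_add_C, mul_one], fun m hm => ?_⟩
  rw [vUnsplit_eq_ncard_paddedWalks hm, hp, eval_comp]
  simp

/-- For fixed `n`, `a`, `b`, the function
`m ↦ v_unsplit^{(n,m)}(a,b)` is a polynomial in `m` of degree at most `2^n - 1`. -/
theorem statement15 (n : ℕ) (hn : 0 < n) (a b : Fin n → ℕ) :
    ∃ p : Polynomial ℚ, p.natDegree ≤ 2 ^ n - 1 ∧
      ∀ m : ℕ, 0 < m → (vUnsplit n m a b : ℚ) = p.eval (m : ℚ) :=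
  statement15_general n a b

end GPS
end

section
/- For every positive integer n, let N = n(n+1)/2. The number of functions π assigning to each cell (i,j) of the staircase shape δ_n = (n, n−1, …, 1) (i.e., each pair (i,j) with 1 ≤ i ≤ n and 1 ≤ j ≤ n+1−i) a value in {0, 1, …, N−1}, using each value exactly once, and satisfying π_{i,j} > π_{i,j+1}, π_{i,j} > π_{i+1,j}, and π_{i,j+1} < π_{i+1,j} whenever both cells involved lie in δ_n, equals N! · (1!·2!⋯(n−1)!)/(1!·3!·5!⋯(2n−1)!). -/
open scoped BigOperators Classical

namespace SP18
open Finset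

/-- Cells of the shape with column heights `μ`. -/
def cellOf (μ : ℕ → ℕ) (i j : ℕ) : Prop := 1 ≤ i ∧ 1 ≤ j ∧ i ≤ μ j

/-- strictly decreasing positive column heights -/
def StrictSh (μ : ℕ → ℕ) : Prop := ∀ j, 1 ≤ j → μ (j+1) < μ j ∨ μ (j+1) = 0

def Nval (B : ℕ) (μ : ℕ → ℕ) : ℕ := ∑ j ∈ Finset.Icc 1 B, μ j

def Fill (cell : ℕ → ℕ → Prop) (N : ℕ) : Set (ℕ → ℕ → ℕ) :=
  { π |
      (∀ i j, ¬ cell i j → π i j = 0) ∧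
      (∀ i j, cell i j → π i j < N) ∧
      (∀ v, v < N → ∃! p : ℕ × ℕ, cell p.1 p.2 ∧ π p.1 p.2 = v) ∧
      (∀ i j, cell i j → cell i (j + 1) → π i (j + 1) < π i j) ∧
      (∀ i j, cell i j → cell (i + 1) j → π (i + 1) j < π i j) ∧
      (∀ i j, cell i (j + 1) → cell (i + 1) j → π i (j + 1) < π (i + 1) j) }

def pairsB (B : ℕ) : Finset (ℕ × ℕ) :=
  ((Finset.Icc 1 B) ×ˢ (Finset.Icc 1 B)).filter (fun p => p.1 < p.2)

noncomputable def wq (a b : ℕ) : ℚ := if b = 0 then 1 else ((a:ℚ) - b)/((a:ℚ) + b)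

lemma pairsB_mem {B : ℕ} {p : ℕ × ℕ} :
    p ∈ pairsB B ↔ (1 ≤ p.1 ∧ p.1 ≤ B ∧ 1 ≤ p.2 ∧ p.2 ≤ B ∧ p.1 < p.2) := by
  unfold pairsB
  simp only [Finset.mem_filter, Finset.mem_product, Finset.mem_Icc]
  tauto


noncomputable def Fq (B : ℕ) (μ : ℕ → ℕ) : ℚ :=
  (Nat.factorial (Nval B μ) : ℚ) * (∏ j ∈ Finset.Icc 1 B, ((Nat.factorial (μ j) : ℚ))⁻¹) *
  ∏ p ∈ pairsB B, wq (μ p.1) (μ p.2)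

/-- removability of the bottom cell of column `j` -/
def Remov (μ : ℕ → ℕ) (j : ℕ) : Prop := 0 < μ j ∧ (μ (j+1) + 2 ≤ μ j ∨ μ j = 1)

section basic
variable {B : ℕ} {μ : ℕ → ℕ}

lemma strict_antitone (h : StrictSh μ) : ∀ a b, 1 ≤ a → a ≤ b → μ b ≤ μ a := by
  intro a b ha
  induction b with
  | zero => intro h0; omega
  | succ m ih =>
    intro hab
    rcases Nat.lt_or_ge m a with h1 | h1
    · have : a = m + 1 := by omega
      subst this
      exact le_refl _
    · have h2 : μ m ≤ μ a := ih (by omega)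
      rcases h m (by omega) with h3 | h3 <;> omega

lemma strict_lt (h : StrictSh μ) {a b : ℕ} (ha : 1 ≤ a) (hab : a < b) (hb : 0 < μ b) :
    μ b < μ a := by
  have hb1 : b - 1 ≥ a := by omega
  have h2 := strict_antitone h a (b-1) ha hb1
  have h3 := h (b-1) (by omega)
  have : b - 1 + 1 = b := by omega
  rw [this] at h3
  omega

lemma cell_bounds (Hs : ∀ j, B < j → μ j = 0) {i j : ℕ} (hc : cellOf μ i j) :
    1 ≤ i ∧ 1 ≤ j ∧ j ≤ B ∧ i ≤ μ j ∧ μ j ≤ Nval B μ := by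
  obtain ⟨h1, h2, h3⟩ := hc
  have hjB : j ≤ B := by
    by_contra hb
    have := Hs j (by omega)
    omega
  have hle : μ j ≤ Nval B μ :=
    Finset.single_le_sum (f := μ) (fun k _ => Nat.zero_le _)
      (Finset.mem_Icc.mpr ⟨h2, hjB⟩)
  exact ⟨h1, h2, hjB, h3, hle⟩

lemma fill_finite (Hs : ∀ j, B < j → μ j = 0) :
    (Fill (cellOf μ) (Nval B μ)).Finite := by
  set N := Nval B μ with hNdef
  set Φ : (ℕ → ℕ → ℕ) → (Fin (N+1) × Fin (B+1) → Fin (N+1)) :=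
    fun π p => ⟨min (π p.1 p.2) N, by omega⟩ with hΦ
  apply Set.Finite.of_finite_image (f := Φ) (Set.toFinite _)
  intro π1 h1 π2 h2 heq
  funext a b
  by_cases hc : cellOf μ a b
  · obtain ⟨ha1, hb1, hbB, haμ, hμN⟩ := cell_bounds Hs hc
    have ha : a < N + 1 := by omega
    have hb : b < B + 1 := by omega
    have := congrFun heq (⟨a, ha⟩, ⟨b, hb⟩)
    simp only [hΦ] at this
    have e1 : π1 a b < N := h1.2.1 a b hc
    have e2 : π2 a b < N := h2.2.1 a b hc
    have := congrArg Fin.val this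
    simp only [min_eq_left (le_of_lt e1), min_eq_left (le_of_lt e2)] at this
    exact this
  · rw [h1.1 a b hc, h2.1 a b hc]

end basic

section comb
variable {B : ℕ} {μ : ℕ → ℕ}

lemma Nval_update {B : ℕ} {μ : ℕ → ℕ} {j : ℕ} (hj : j ∈ Finset.Icc 1 B) (hpos : 0 < μ j) :
    Nval B (Function.update μ j (μ j - 1)) = Nval B μ - 1 ∧ μ j ≤ Nval B μ := by
  unfold Nval
  rw [Finset.sum_update_of_mem hj, ← Finset.erase_eq]
  have h1 : μ j + ∑ x ∈ (Finset.Icc 1 B).erase j, μ x = ∑ x ∈ Finset.Icc 1 B, μ x :=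
    Finset.add_sum_erase _ _ hj
  omega

lemma cell_update {μ : ℕ → ℕ} {j : ℕ} (hpos : 0 < μ j) (a b : ℕ) :
    cellOf (Function.update μ j (μ j - 1)) a b ↔
      (cellOf μ a b ∧ ¬ (a = μ j ∧ b = j)) := by
  unfold cellOf
  by_cases hbj : b = j
  · subst hbj
    rw [Function.update_self]
    omega
  · rw [Function.update_of_ne hbj]
    have : ¬ (a = μ j ∧ b = j) := fun h => hbj h.2
    tauto

/-- the position of the entry `0` in a filling -/
lemma zero_props {B : ℕ} {μ : ℕ → ℕ} (Hs : ∀ j, B < j → μ j = 0) (Hst : StrictSh μ)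
    (hN : 0 < Nval B μ) {π : ℕ → ℕ → ℕ} (hπ : π ∈ Fill (cellOf μ) (Nval B μ)) :
    ∃ j, (1 ≤ j ∧ j ≤ B ∧ Remov μ j) ∧ π (μ j) j = 0 ∧
      (∀ a b, cellOf μ a b → π a b = 0 → a = μ j ∧ b = j) := by
  obtain ⟨h1, h2, h3, h4, h5, h6⟩ := hπ
  obtain ⟨p, ⟨hpc, hp0⟩, hpu⟩ := h3 0 hN
  have hA : p.1 = μ p.2 := by
    by_contra hne
    have hc2 : cellOf μ (p.1 + 1) p.2 := ⟨by omega, hpc.2.1, by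
      have := hpc.2.2
      omega⟩
    have := h5 p.1 p.2 hpc hc2
    omega
  have hpos : 0 < μ p.2 := by
    have := hpc.2.2
    have := hpc.1
    omega
  have hp2B : p.2 ≤ B := by
    by_contra hb
    have := Hs p.2 (by omega)
    omega
  have hrem : Remov μ p.2 := by
    refine ⟨hpos, ?_⟩
    by_contra hbad
    push_neg at hbad
    obtain ⟨hbad1, hbad2⟩ := hbad
    have hstep : μ (p.2 + 1) = μ p.2 - 1 := by
      rcases Hst p.2 hpc.2.1 with h | h <;> omega
    have hc1 : cellOf μ (μ p.2 - 1) (p.2 + 1) := ⟨by omega, by omega, by omega⟩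
    have hc2 : cellOf μ (μ p.2 - 1 + 1) p.2 := ⟨by omega, hpc.2.1, by omega⟩
    have := h6 (μ p.2 - 1) p.2 hc1 hc2
    rw [show μ p.2 - 1 + 1 = μ p.2 by omega, ← hA, hp0] at this
    omega
  refine ⟨p.2, ⟨hpc.2.1, hp2B, hrem⟩, by rw [← hA]; exact hp0, ?_⟩
  intro a b hab h0
  have := hpu (a, b) ⟨hab, h0⟩
  rw [Prod.ext_iff] at this
  constructor
  · rw [← hA]; exact this.1
  · exact this.2

lemma ncard_biUnion {α : Type*} (V : Finset ℕ) (Z : ℕ → Set α)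
    (hfin : ∀ j ∈ V, (Z j).Finite)
    (hdisj : ∀ j ∈ V, ∀ k ∈ V, j ≠ k → Disjoint (Z j) (Z k)) :
    (⋃ j ∈ V, Z j).ncard = ∑ j ∈ V, (Z j).ncard := by
  classical
  induction V using Finset.induction with
  | empty => simp
  | @insert a V ha ih =>
    rw [Finset.set_biUnion_insert, Finset.sum_insert ha]
    have hfin' : ∀ j ∈ V, (Z j).Finite := fun j hj => hfin j (Finset.mem_insert_of_mem hj)
    have hUfin : (⋃ j ∈ V, Z j).Finite :=
      Set.Finite.biUnion V.finite_toSet (fun j hj => hfin' j hj)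
    have hdisj2 : Disjoint (Z a) (⋃ j ∈ V, Z j) := by
      rw [Set.disjoint_iUnion_right]
      intro j
      rw [Set.disjoint_iUnion_right]
      intro hj
      exact hdisj a (Finset.mem_insert_self a V) j (Finset.mem_insert_of_mem hj)
        (fun h => ha (h ▸ hj))
    rw [Set.ncard_union_eq hdisj2 (hfin a (Finset.mem_insert_self a V)) hUfin,
      ih hfin' (fun j hj k hk hjk =>
        hdisj j (Finset.mem_insert_of_mem hj) k (Finset.mem_insert_of_mem hk) hjk)]

lemma card_Zj {B : ℕ} {μ : ℕ → ℕ} (Hst : StrictSh μ) (hN : 0 < Nval B μ) {j : ℕ}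
    (hj1 : 1 ≤ j) (hjB : j ≤ B) (hrem : Remov μ j) :
    ({π | π ∈ Fill (cellOf μ) (Nval B μ) ∧ π (μ j) j = 0}).ncard =
      (Fill (cellOf (Function.update μ j (μ j - 1)))
        (Nval B (Function.update μ j (μ j - 1)))).ncard := by
  classical
  obtain ⟨hpos, hrem2⟩ := hrem
  have hjIcc : j ∈ Finset.Icc 1 B := Finset.mem_Icc.mpr ⟨hj1, hjB⟩
  obtain ⟨hNu, hμN⟩ := Nval_update hjIcc hpos
  have cellμj : cellOf μ (μ j) j := ⟨hpos, hj1, le_refl _⟩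
  set Z := {π | π ∈ Fill (cellOf μ) (Nval B μ) ∧ π (μ j) j = 0} with hZ
  have hzu : ∀ π, π ∈ Z → ∀ a b, cellOf μ a b → π a b = 0 → a = μ j ∧ b = j := by
    intro π hπ a b hab h0
    obtain ⟨p, hp, hpu⟩ := hπ.1.2.2.1 0 hN
    have e1 := hpu (μ j, j) ⟨cellμj, hπ.2⟩
    have e2 := hpu (a, b) ⟨hab, h0⟩
    rw [← e1, Prod.ext_iff] at e2
    exact e2
  have hge1 : ∀ π, π ∈ Z → ∀ a b, cellOf μ a b → ¬(a = μ j ∧ b = j) → 1 ≤ π a b := by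
    intro π hπ a b hab hne
    by_contra h
    exact hne (hzu π hπ a b hab (by omega))
  have hinj : Set.InjOn (fun π : ℕ → ℕ → ℕ => fun a b => π a b - 1) Z := by
    intro π hπ ρ hρ heq
    funext a b
    by_cases hc : cellOf μ a b
    · by_cases hz : a = μ j ∧ b = j
      · rw [hz.1, hz.2, hπ.2, hρ.2]
      · have g1 := hge1 π hπ a b hc hz
        have g2 := hge1 ρ hρ a b hc hz
        have := congrFun (congrFun heq a) b
        simp only at this
        omega
    · rw [hπ.1.1 a b hc, hρ.1.1 a b hc]
  have himg : (fun π : ℕ → ℕ → ℕ => fun a b => π a b - 1) '' Z =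
      Fill (cellOf (Function.update μ j (μ j - 1)))
        (Nval B (Function.update μ j (μ j - 1))) := by
    ext ρ
    constructor
    · rintro ⟨π, hπZ, rfl⟩
      obtain ⟨⟨f1, f2, f3, f4, f5, f6⟩, fz⟩ := hπZ
      have hπZ' : π ∈ Z := ⟨⟨f1, f2, f3, f4, f5, f6⟩, fz⟩
      show (fun a b => π a b - 1) ∈ _
      refine ⟨?_, ?_, ?_, ?_, ?_, ?_⟩
      · intro a b hnc
        show π a b - 1 = 0
        by_cases hc : cellOf μ a b
        · rw [cell_update hpos] at hnc
          push_neg at hnc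
          have he := hnc hc
          rw [he.1, he.2, fz]
        · rw [f1 a b hc]
      · intro a b hc
        show π a b - 1 < _
        rw [cell_update hpos] at hc
        have g1 := hge1 π hπZ' a b hc.1 hc.2
        have g2 := f2 a b hc.1
        rw [hNu]
        omega
      · intro v hv
        rw [hNu] at hv
        obtain ⟨p, ⟨hpc, hp0⟩, hpu⟩ := f3 (v + 1) (by omega)
        have hpne : ¬ (p.1 = μ j ∧ p.2 = j) := by
          intro h
          rw [h.1, h.2, fz] at hp0
          omega
        refine ⟨p, ⟨(cell_update hpos p.1 p.2).mpr ⟨hpc, hpne⟩,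
          show π p.1 p.2 - 1 = v by omega⟩, ?_⟩
        rintro q ⟨hqc, hq0⟩
        have hq0' : π q.1 q.2 - 1 = v := hq0
        rw [cell_update hpos] at hqc
        have g1 := hge1 π hπZ' q.1 q.2 hqc.1 hqc.2
        exact hpu q ⟨hqc.1, by omega⟩
      · intro a b hc1 hc2
        show π a (b + 1) - 1 < π a b - 1
        rw [cell_update hpos] at hc1 hc2
        have := f4 a b hc1.1 hc2.1
        have g1 := hge1 π hπZ' a (b + 1) hc2.1 hc2.2
        omega
      · intro a b hc1 hc2
        show π (a + 1) b - 1 < π a b - 1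
        rw [cell_update hpos] at hc1 hc2
        have := f5 a b hc1.1 hc2.1
        have g1 := hge1 π hπZ' (a + 1) b hc2.1 hc2.2
        omega
      · intro a b hc1 hc2
        show π a (b + 1) - 1 < π (a + 1) b - 1
        rw [cell_update hpos] at hc1 hc2
        have := f6 a b hc1.1 hc2.1
        have g1 := hge1 π hπZ' a (b + 1) hc1.1 hc1.2
        omega
    · intro hρ
      obtain ⟨g1, g2, g3, g4, g5, g6⟩ := hρ
      set π : ℕ → ℕ → ℕ := fun a b =>
        if a = μ j ∧ b = j then 0 else if cellOf μ a b then ρ a b + 1 else 0 with hπdef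
      have hπz : π (μ j) j = 0 := by
        rw [hπdef]
        simp only [and_self, if_pos]
      have hval : ∀ a b, a = μ j ∧ b = j → π a b = 0 := by
        intro a b h
        rw [hπdef]
        simp only [h.1, h.2, and_self, if_pos]
      have hval2 : ∀ a b, ¬(a = μ j ∧ b = j) → cellOf μ a b → π a b = ρ a b + 1 := by
        intro a b h hc
        rw [hπdef]
        simp only [if_neg h, if_pos hc]
      have hval3 : ∀ a b, ¬ cellOf μ a b → π a b = 0 := by
        intro a b hc
        rw [hπdef]
        have : ¬ (a = μ j ∧ b = j) := by
          intro h
          rw [h.1, h.2] at hc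
          exact hc cellμj
        simp only [if_neg this, if_neg hc]
      have hπFill : π ∈ Fill (cellOf μ) (Nval B μ) := by
        refine ⟨hval3, ?_, ?_, ?_, ?_, ?_⟩
        · intro a b hc
          by_cases hz : a = μ j ∧ b = j
          · rw [hval a b hz]; omega
          · rw [hval2 a b hz hc]
            have := g2 a b ((cell_update hpos a b).mpr ⟨hc, hz⟩)
            rw [hNu] at this
            omega
        · intro v hv
          rcases Nat.eq_zero_or_pos v with rfl | hvpos
          · refine ⟨(μ j, j), ⟨cellμj, hπz⟩, ?_⟩
            rintro q ⟨hqc, hq0⟩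
            by_cases hz : q.1 = μ j ∧ q.2 = j
            · rw [Prod.ext_iff]; exact hz
            · rw [hval2 q.1 q.2 hz hqc] at hq0
              omega
          · obtain ⟨q, ⟨hqc, hq0⟩, hqu⟩ := g3 (v - 1) (by rw [hNu]; omega)
            rw [cell_update hpos] at hqc
            refine ⟨q, ⟨hqc.1, by rw [hval2 q.1 q.2 hqc.2 hqc.1]; omega⟩, ?_⟩
            rintro r ⟨hrc, hr0⟩
            have hrz : ¬ (r.1 = μ j ∧ r.2 = j) := by
              intro h
              rw [hval r.1 r.2 h] at hr0
              omega
            rw [hval2 r.1 r.2 hrz hrc] at hr0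
            exact hqu r ⟨(cell_update hpos r.1 r.2).mpr ⟨hrc, hrz⟩, by omega⟩
        · -- rows
          intro a b hc1 hc2
          by_cases hz1 : a = μ j ∧ b = j
          · exfalso
            have hcell2 := hc2.2.2
            rw [hz1.2] at hcell2
            rcases Hst j hj1 with h | h <;> rw [hz1.1] at hcell2 <;> omega
          · by_cases hz2 : a = μ j ∧ b + 1 = j
            · rw [hval a (b + 1) hz2, hval2 a b hz1 hc1]
              omega
            · rw [hval2 a (b + 1) hz2 hc2, hval2 a b hz1 hc1]
              have := g4 a b ((cell_update hpos a b).mpr ⟨hc1, hz1⟩)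
                ((cell_update hpos a (b + 1)).mpr ⟨hc2, hz2⟩)
              omega
        · -- columns
          intro a b hc1 hc2
          by_cases hz1 : a = μ j ∧ b = j
          · exfalso
            have hcell2 := hc2.2.2
            rw [hz1.2, hz1.1] at hcell2
            omega
          · by_cases hz2 : a + 1 = μ j ∧ b = j
            · rw [hval (a + 1) b hz2, hval2 a b hz1 hc1]
              omega
            · rw [hval2 (a + 1) b hz2 hc2, hval2 a b hz1 hc1]
              have := g5 a b ((cell_update hpos a b).mpr ⟨hc1, hz1⟩)
                ((cell_update hpos (a + 1) b).mpr ⟨hc2, hz2⟩)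
              omega
        · -- diagonals
          intro a b hc1 hc2
          by_cases hz1 : a + 1 = μ j ∧ b = j
          · exfalso
            have hcell1 : a ≤ μ (b + 1) := hc1.2.2
            have ha1 : 1 ≤ a := hc1.1
            rw [hz1.2] at hcell1
            rcases hrem2 with h | h <;> omega
          · by_cases hz2 : a = μ j ∧ b + 1 = j
            · rw [hval a (b + 1) hz2, hval2 (a + 1) b hz1 hc2]
              omega
            · rw [hval2 a (b + 1) hz2 hc1, hval2 (a + 1) b hz1 hc2]
              have := g6 a b ((cell_update hpos a (b + 1)).mpr ⟨hc1, hz2⟩)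
                ((cell_update hpos (a + 1) b).mpr ⟨hc2, hz1⟩)
              omega
      refine ⟨π, ⟨hπFill, hπz⟩, ?_⟩
      funext a b
      simp only
      by_cases hz : a = μ j ∧ b = j
      · rw [hval a b hz]
        have : ¬ cellOf (Function.update μ j (μ j - 1)) a b := by
          rw [cell_update hpos]
          tauto
        rw [g1 a b this]
      · by_cases hc : cellOf μ a b
        · rw [hval2 a b hz hc]
          omega
        · rw [hval3 a b hc, g1 a b (by rw [cell_update hpos]; tauto)]
  rw [← himg, Set.ncard_image_of_injOn hinj]

/-- the combinatorial recursion -/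
lemma card_rec (Hs : ∀ j, B < j → μ j = 0) (Hst : StrictSh μ) (hN : 0 < Nval B μ) :
    (Fill (cellOf μ) (Nval B μ)).ncard =
      ∑ j ∈ (Finset.Icc 1 B).filter (fun j => Remov μ j),
        (Fill (cellOf (Function.update μ j (μ j - 1)))
          (Nval B (Function.update μ j (μ j - 1)))).ncard := by
  classical
  set V := (Finset.Icc 1 B).filter (fun j => Remov μ j) with hV
  set Z : ℕ → Set (ℕ → ℕ → ℕ) :=
    fun j => {π | π ∈ Fill (cellOf μ) (Nval B μ) ∧ π (μ j) j = 0} with hZdef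
  have hfinFill := fill_finite (μ := μ) Hs
  have hfinZ : ∀ j ∈ V, (Z j).Finite :=
    fun j _ => hfinFill.subset (fun π hπ => hπ.1)
  have hVmem : ∀ j ∈ V, 1 ≤ j ∧ j ≤ B ∧ Remov μ j := by
    intro j hj
    rw [hV, Finset.mem_filter, Finset.mem_Icc] at hj
    tauto
  have hcover : Fill (cellOf μ) (Nval B μ) = ⋃ j ∈ V, Z j := by
    ext π
    constructor
    · intro hπ
      obtain ⟨j, ⟨hj1, hjB, hrem⟩, hz, _⟩ := zero_props Hs Hst hN hπ
      exact Set.mem_biUnion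
        (show j ∈ V by rw [hV, Finset.mem_filter, Finset.mem_Icc]; exact ⟨⟨hj1, hjB⟩, hrem⟩)
        ⟨hπ, hz⟩
    · intro hπ
      simp only [Set.mem_iUnion] at hπ
      obtain ⟨j, _, hmem⟩ := hπ
      exact hmem.1
  have hdisj : ∀ j ∈ V, ∀ k ∈ V, j ≠ k → Disjoint (Z j) (Z k) := by
    intro j hj k hk hjk
    obtain ⟨hj1, hjB, hremj⟩ := hVmem j hj
    obtain ⟨hk1, hkB, hremk⟩ := hVmem k hk
    rw [Set.disjoint_left]
    intro π hπj hπk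
    obtain ⟨m, _, _, hu⟩ := zero_props Hs Hst hN hπj.1
    have e1 := hu (μ j) j ⟨hremj.1, hj1, le_refl _⟩ hπj.2
    have e2 := hu (μ k) k ⟨hremk.1, hk1, le_refl _⟩ hπk.2
    exact hjk (e1.2.trans e2.2.symm)
  rw [hcover, ncard_biUnion V Z hfinZ hdisj]
  apply Finset.sum_congr rfl
  intro j hj
  obtain ⟨hj1, hjB, hrem⟩ := hVmem j hj
  exact card_Zj Hst hN hj1 hjB hrem

end comb

section alg

open Polynomial in
lemma coeff_basis {s : Finset ℕ} {v : ℕ → ℚ} {j : ℕ} (hj : j ∈ s) :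
    (Lagrange.basis s v j).coeff (s.card - 1) =
      (∏ k ∈ s.erase j, (v j - v k))⁻¹ := by
  unfold Lagrange.basis Lagrange.basisDivisor
  rw [Finset.prod_mul_distrib]
  have hC : (∏ k ∈ s.erase j, C ((v j - v k)⁻¹)) = C (∏ k ∈ s.erase j, (v j - v k))⁻¹ := by
    rw [← map_prod, ← Finset.prod_inv_distrib]
  rw [hC, Polynomial.coeff_C_mul]
  have hmon : (∏ k ∈ s.erase j, (X - C (v k))).Monic :=
    Polynomial.monic_prod_of_monic _ _ (fun k _ => Polynomial.monic_X_sub_C _)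
  have hdeg : (∏ k ∈ s.erase j, (X - C (v k))).natDegree = s.card - 1 := by
    rw [Polynomial.natDegree_prod_of_monic _ _ (fun k _ => Polynomial.monic_X_sub_C _)]
    simp [Finset.card_erase_of_mem hj]
  rw [show s.card - 1 = (∏ k ∈ s.erase j, (X - C (v k))).natDegree from hdeg.symm,
    hmon.coeff_natDegree, mul_one]

open Polynomial in
lemma dd_sum {s : Finset ℕ} {v : ℕ → ℚ} (hvs : Set.InjOn v s) (P : Polynomial ℚ)
    (hdeg : P.degree < s.card) :
    ∑ j ∈ s, P.eval (v j) / ∏ k ∈ s.erase j, (v j - v k) = P.coeff (s.card - 1) := by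
  conv_rhs => rw [Lagrange.eq_interpolate hvs hdeg]
  rw [Lagrange.interpolate_apply, Polynomial.finset_sum_coeff]
  apply Finset.sum_congr rfl
  intro j hj
  rw [Polynomial.coeff_C_mul, coeff_basis hj, div_eq_mul_inv]

/-- the key rational-function identity, proven via Lagrange interpolation -/
lemma key_identity (s : Finset ℕ) (t : ℕ → ℚ) (h1 : ∀ j ∈ s, 1 ≤ t j)
    (hinj : Set.InjOn t s) :
    ∑ j ∈ s, t j * ∏ k ∈ s.erase j,
        ((t j - t k - 1) * (t j + t k)) / ((t j - t k) * (t j + t k - 1)) =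
      ∑ j ∈ s, t j := by
  classical
  rcases Finset.eq_empty_or_nonempty s with rfl | hne
  · simp
  have hm1 : 1 ≤ s.card := Finset.card_pos.mpr hne
  set v : ℕ → ℚ := fun j => (t j - 1/2)^2 with hv
  set w : ℕ → ℚ := fun j => (t j + 1/2)^2 with hw
  have hvinj : Set.InjOn v s := by
    intro a ha b hb hab
    have h1a := h1 a ha; have h1b := h1 b hb
    have h2 : (t a - t b) * (t a + t b - 1) = 0 := by
      simp only [hv] at hab
      linear_combination hab
    have h3 : t a = t b := by
      rcases mul_eq_zero.mp h2 with h | h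
      · linarith
      · linarith
    exact hinj ha hb h3
  set Q : Polynomial ℚ := ∏ k ∈ s, (Polynomial.X - Polynomial.C (w k)) with hQ
  set V : Polynomial ℚ := ∏ k ∈ s, (Polynomial.X - Polynomial.C (v k)) with hV
  set Pp : Polynomial ℚ := Q - V with hPp
  have hQm : Q.Monic := Polynomial.monic_prod_of_monic _ _
    (fun k _ => Polynomial.monic_X_sub_C _)
  have hVm : V.Monic := Polynomial.monic_prod_of_monic _ _
    (fun k _ => Polynomial.monic_X_sub_C _)
  have hQd : Q.natDegree = s.card := by
    rw [hQ, Polynomial.natDegree_prod_of_monic _ _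
      (fun k _ => Polynomial.monic_X_sub_C _)]
    simp
  have hVd : V.natDegree = s.card := by
    rw [hV, Polynomial.natDegree_prod_of_monic _ _
      (fun k _ => Polynomial.monic_X_sub_C _)]
    simp
  have hdegPp : Pp.degree < (s.card : WithBot ℕ) := by
    have h := Polynomial.degree_sub_lt (q := V) ?_ hQm.ne_zero ?_
    · rw [Polynomial.degree_eq_natDegree hQm.ne_zero, hQd] at h
      exact h
    · rw [Polynomial.degree_eq_natDegree hQm.ne_zero,
        Polynomial.degree_eq_natDegree hVm.ne_zero, hQd, hVd]
    · rw [hQm.leadingCoeff, hVm.leadingCoeff]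
  -- rewrite each term
  have hterm : ∀ j ∈ s, t j * ∏ k ∈ s.erase j,
      ((t j - t k - 1) * (t j + t k)) / ((t j - t k) * (t j + t k - 1)) =
      -(1/2) * (Pp.eval (v j) / ∏ k ∈ s.erase j, (v j - v k)) := by
    intro j hj
    have hnum : ∀ k ∈ s.erase j,
        ((t j - t k - 1) * (t j + t k)) / ((t j - t k) * (t j + t k - 1)) =
        (v j - w k) / (v j - v k) := by
      intro k _
      have e1 : (t j - t k - 1) * (t j + t k) = v j - w k := by
        simp only [hv, hw]; ring
      have e2 : (t j - t k) * (t j + t k - 1) = v j - v k := by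
        simp only [hv, hw]; ring
      rw [e1, e2]
    rw [Finset.prod_congr rfl hnum, Finset.prod_div_distrib]
    have hVeval : V.eval (v j) = 0 := by
      rw [hV, Polynomial.eval_prod]
      apply Finset.prod_eq_zero hj
      simp
    have hPeval : Pp.eval (v j) = (v j - w j) * ∏ k ∈ s.erase j, (v j - w k) := by
      rw [hPp, Polynomial.eval_sub, hVeval, sub_zero, hQ, Polynomial.eval_prod]
      rw [← Finset.mul_prod_erase s _ hj]
      simp
    rw [hPeval]
    have hvw : v j - w j = -2 * t j := by simp only [hv, hw]; ring
    rw [hvw]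
    ring
  rw [Finset.sum_congr rfl hterm, ← Finset.mul_sum, dd_sum hvinj Pp hdegPp]
  have hQc : Q.coeff (s.card - 1) = -∑ k ∈ s, w k := by
    have h := Polynomial.prod_X_sub_C_nextCoeff (s := s) w
    rwa [Polynomial.nextCoeff_of_natDegree_pos (by rw [hQd]; omega), hQd] at h
  have hVc : V.coeff (s.card - 1) = -∑ k ∈ s, v k := by
    have h := Polynomial.prod_X_sub_C_nextCoeff (s := s) v
    rwa [Polynomial.nextCoeff_of_natDegree_pos (by rw [hVd]; omega), hVd] at h
  rw [hPp, Polynomial.coeff_sub, hQc, hVc]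
  have : -∑ k ∈ s, w k - -∑ k ∈ s, v k = ∑ k ∈ s, (v k - w k) := by
    rw [Finset.sum_sub_distrib]; ring
  rw [this]
  have h2 : ∀ k ∈ s, v k - w k = -2 * t k := by
    intro k _; simp only [hv, hw]; ring
  rw [Finset.sum_congr rfl h2]
  rw [Finset.sum_congr rfl (fun k _ => rfl : ∀ k ∈ s, -2 * t k = -2 * t k), ← Finset.mul_sum]
  ring

variable {B : ℕ} {μ : ℕ → ℕ}

/-- vanishing of `Fq` when two adjacent positive parts are equal -/
lemma Fq_vanish (Hs : ∀ j, B < j → μ j = 0) {j : ℕ} (hj : 1 ≤ j)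
    (h0 : 0 < μ (j+1)) (he : μ j = μ (j+1)) : Fq B μ = 0 := by
  have hjB : j + 1 ≤ B := by
    by_contra hb
    have := Hs (j+1) (by omega)
    omega
  have hmem : ((j, j+1) : ℕ × ℕ) ∈ pairsB B := pairsB_mem.mpr (by omega)
  have hzero : wq (μ j) (μ (j+1)) = 0 := by
    unfold wq
    rw [if_neg (by omega), he, sub_self, zero_div]
  unfold Fq
  rw [Finset.prod_eq_zero hmem hzero, mul_zero]

lemma wq_zero (a : ℕ) : wq a 0 = 1 := by unfold wq; rw [if_pos rfl]

/-- ratio lemma, case of a pair `(k,j)` with `k < j` (so `a = μ k > b = μ j`) -/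
lemma wq_ratio_lt (a b : ℕ) (hb : 1 ≤ b) (hab : b < a) :
    wq a (b - 1) = wq a b *
      ((((b:ℚ) - a - 1) * ((b:ℚ) + a)) / (((b:ℚ) - a) * ((b:ℚ) + a - 1))) := by
  have hba : (b:ℚ) - a ≠ 0 := by
    intro h
    have : (b:ℚ) = a := by linarith
    exact_mod_cast absurd (Nat.cast_injective this) (by omega)
  have h2 : (b:ℚ) + a - 1 ≠ 0 := by
    have : (1:ℚ) ≤ (b:ℚ) := by exact_mod_cast hb
    have : (1:ℚ) ≤ (a:ℚ) := by exact_mod_cast (by omega : 1 ≤ a)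
    intro h; linarith
  have h3 : (b:ℚ) + a ≠ 0 := by
    have : (1:ℚ) ≤ (a:ℚ) := by exact_mod_cast (by omega : 1 ≤ a)
    have : (0:ℚ) ≤ (b:ℚ) := by positivity
    intro h; linarith
  rcases Nat.lt_or_ge b 2 with hb1 | hb2
  · have hb1' : b = 1 := by omega
    subst hb1'
    unfold wq
    rw [if_pos rfl, if_neg (by omega)]
    have ha1 : (1:ℚ) + a ≠ 0 := by
      have : (1:ℚ) ≤ (a:ℚ) := by exact_mod_cast (by omega : 1 ≤ a)
      intro h; linarith
    push_cast at *
    field_simp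
    ring
  · unfold wq
    rw [if_neg (by omega), if_neg (by omega)]
    have hcast : ((b - 1 : ℕ) : ℚ) = (b:ℚ) - 1 := by
      rw [Nat.cast_sub (by omega)]; norm_num
    rw [hcast]
    have h4 : (a:ℚ) + ((b:ℚ) - 1) ≠ 0 := by
      have : (1:ℚ) ≤ (a:ℚ) := by exact_mod_cast (by omega : 1 ≤ a)
      have : (2:ℚ) ≤ (b:ℚ) := by exact_mod_cast hb2
      intro h; linarith
    have h5 : (a:ℚ) + (b:ℚ) ≠ 0 := by
      intro h
      apply h3; linarith
    field_simp
    ring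

/-- ratio lemma, case of a pair `(j,k)` with `j < k` (so `b = μ j > a = μ k`) -/
lemma wq_ratio_gt (a b : ℕ) (ha : 1 ≤ a) (hab : a < b) :
    wq (b - 1) a = wq b a *
      ((((b:ℚ) - a - 1) * ((b:ℚ) + a)) / (((b:ℚ) - a) * ((b:ℚ) + a - 1))) := by
  have hba : (b:ℚ) - a ≠ 0 := by
    intro h
    have : (b:ℚ) = a := by linarith
    exact_mod_cast absurd (Nat.cast_injective this) (by omega)
  have ha1 : (1:ℚ) ≤ (a:ℚ) := by exact_mod_cast ha
  have hb2 : (2:ℚ) ≤ (b:ℚ) := by exact_mod_cast (by omega : 2 ≤ b)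
  have h2 : (b:ℚ) + a - 1 ≠ 0 := by intro h; linarith
  have h3 : (b:ℚ) + a ≠ 0 := by intro h; linarith
  unfold wq
  rw [if_neg (by omega), if_neg (by omega)]
  have hcast : ((b - 1 : ℕ) : ℚ) = (b:ℚ) - 1 := by
    rw [Nat.cast_sub (by omega)]; norm_num
  rw [hcast]
  have h4 : (b:ℚ) - 1 + a ≠ 0 := by intro h; linarith
  field_simp
  ring

lemma fact_inv_update {B : ℕ} {μ : ℕ → ℕ} {j : ℕ} (hj : j ∈ Finset.Icc 1 B)
    (hpos : 0 < μ j) :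
    ∏ x ∈ Finset.Icc 1 B, ((Nat.factorial (Function.update μ j (μ j - 1) x) : ℚ))⁻¹ =
      (μ j : ℚ) * ∏ x ∈ Finset.Icc 1 B, ((Nat.factorial (μ x) : ℚ))⁻¹ := by
  have hfun : (fun x => ((Nat.factorial (Function.update μ j (μ j - 1) x) : ℚ))⁻¹) =
      Function.update (fun x => ((Nat.factorial (μ x) : ℚ))⁻¹) j
        ((Nat.factorial (μ j - 1) : ℚ))⁻¹ := by
    funext x
    by_cases hx : x = j
    · subst hx; rw [Function.update_self, Function.update_self]
    · rw [Function.update_of_ne hx, Function.update_of_ne hx]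
  rw [hfun, Finset.prod_update_of_mem hj, ← Finset.erase_eq,
    ← Finset.mul_prod_erase (Finset.Icc 1 B) (fun x => ((Nat.factorial (μ x) : ℚ))⁻¹) hj]
  have hfact : ((Nat.factorial (μ j - 1) : ℚ))⁻¹ = (μ j : ℚ) * ((Nat.factorial (μ j) : ℚ))⁻¹ := by
    have h1 : μ j = (μ j - 1) + 1 := by omega
    have h2 : (Nat.factorial (μ j) : ℚ) = (μ j : ℚ) * (Nat.factorial (μ j - 1) : ℚ) := by
      nth_rewrite 1 [h1]
      rw [Nat.factorial_succ]
      nth_rewrite 1 [← h1]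
      push_cast
      ring
    rw [h2]
    have h3 : (Nat.factorial (μ j - 1) : ℚ) ≠ 0 := Nat.cast_ne_zero.mpr (Nat.factorial_ne_zero _)
    have h4 : (μ j : ℚ) ≠ 0 := Nat.cast_ne_zero.mpr (by omega)
    field_simp
  rw [hfact, mul_assoc]

/-- decomposition of the pair product isolating pairs containing `j` -/
lemma W_split (B : ℕ) (ν : ℕ → ℕ) {j : ℕ} (hj : j ∈ Finset.Icc 1 B) :
    ∏ p ∈ pairsB B, wq (ν p.1) (ν p.2) =
      (∏ p ∈ (pairsB B).filter (fun p => p.1 ≠ j ∧ p.2 ≠ j), wq (ν p.1) (ν p.2)) *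
      ∏ k ∈ (Finset.Icc 1 B).erase j,
        (if k < j then wq (ν k) (ν j) else wq (ν j) (ν k)) := by
  simp only [Finset.mem_Icc] at hj
  have hsplit : pairsB B = ((pairsB B).filter (fun p => p.1 ≠ j ∧ p.2 ≠ j)) ∪
      ((Finset.Icc 1 B).erase j).image (fun k => if k < j then (k, j) else (j, k)) := by
    ext p
    simp only [Finset.mem_union, Finset.mem_filter, Finset.mem_image, Finset.mem_erase,
      Finset.mem_Icc, pairsB_mem]
    constructor
    · rintro ⟨h1, h2, h3, h4, h5⟩
      by_cases hpj : p.1 ≠ j ∧ p.2 ≠ j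
      · left; exact ⟨⟨h1, h2, h3, h4, h5⟩, hpj⟩
      · right
        push_neg at hpj
        by_cases hp1 : p.1 = j
        · refine ⟨p.2, ⟨by omega, by omega, by omega⟩, ?_⟩
          rw [if_neg (by omega), Prod.ext_iff]
          exact ⟨hp1.symm, rfl⟩
        · refine ⟨p.1, ⟨by omega, by omega, by omega⟩, ?_⟩
          have hp2 : p.2 = j := hpj hp1
          rw [if_pos (by omega), Prod.ext_iff]
          exact ⟨rfl, hp2.symm⟩
    · rintro (⟨h, _⟩ | ⟨k, ⟨hk1, hk2, hk3⟩, rfl⟩)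
      · exact h
      · by_cases hkj : k < j
        · rw [if_pos hkj]; omega
        · rw [if_neg hkj]
          simp only
          omega
  have hinj : ∀ a ∈ (Finset.Icc 1 B).erase j, ∀ b ∈ (Finset.Icc 1 B).erase j,
      (if a < j then (a, j) else (j, a)) = (if b < j then (b, j) else (j, b)) → a = b := by
    intro a ha b hb hab
    simp only [Finset.mem_erase, Finset.mem_Icc] at ha hb
    by_cases ha1 : a < j <;> by_cases hb1 : b < j
    · rw [if_pos ha1, if_pos hb1, Prod.ext_iff] at hab; exact hab.1
    · rw [if_pos ha1, if_neg hb1, Prod.ext_iff] at hab; omega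
    · rw [if_neg ha1, if_pos hb1, Prod.ext_iff] at hab; omega
    · rw [if_neg ha1, if_neg hb1, Prod.ext_iff] at hab; exact hab.2
  have hdisj : Disjoint ((pairsB B).filter (fun p => p.1 ≠ j ∧ p.2 ≠ j))
      (((Finset.Icc 1 B).erase j).image (fun k => if k < j then (k, j) else (j, k))) := by
    rw [Finset.disjoint_right]
    rintro p hp hp2
    simp only [Finset.mem_image, Finset.mem_erase, Finset.mem_Icc] at hp
    obtain ⟨k, hk, rfl⟩ := hp
    rw [Finset.mem_filter] at hp2
    by_cases hkj : k < j
    · rw [if_pos hkj] at hp2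
      exact hp2.2.2 rfl
    · rw [if_neg hkj] at hp2
      exact hp2.2.1 rfl
  conv_lhs => rw [hsplit]
  rw [Finset.prod_union hdisj, Finset.prod_image hinj]
  congr 1
  apply Finset.prod_congr rfl
  intro k hk
  by_cases hkj : k < j
  · rw [if_pos hkj, if_pos hkj]
  · rw [if_neg hkj, if_neg hkj]

/-- the algebraic recursion -/
lemma Fq_rec (Hs : ∀ j, B < j → μ j = 0) (Hst : StrictSh μ) (hN : 0 < Nval B μ) :
    Fq B μ = ∑ j ∈ (Finset.Icc 1 B).filter (fun j => 0 < μ j),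
        Fq B (Function.update μ j (μ j - 1)) := by
  classical
  set P := (Finset.Icc 1 B).filter (fun j => 0 < μ j) with hP
  have hPmem : ∀ j ∈ P, 1 ≤ j ∧ j ≤ B ∧ 1 ≤ μ j := by
    intro j hj
    rw [hP, Finset.mem_filter, Finset.mem_Icc] at hj
    omega
  have hNQ : ((Nval B μ : ℕ) : ℚ) ≠ 0 := Nat.cast_ne_zero.mpr (by omega)
  have hratio : ∀ j ∈ P, Fq B (Function.update μ j (μ j - 1)) =
      Fq B μ * ((μ j : ℚ) / ((Nval B μ : ℕ) : ℚ)) *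
        ∏ k ∈ P.erase j,
          (((μ j : ℚ) - (μ k : ℚ) - 1) * ((μ j : ℚ) + (μ k : ℚ))) /
            (((μ j : ℚ) - (μ k : ℚ)) * ((μ j : ℚ) + (μ k : ℚ) - 1)) := by
    intro j hjP
    obtain ⟨hj1, hjB, hμ1⟩ := hPmem j hjP
    have hjIcc : j ∈ Finset.Icc 1 B := Finset.mem_Icc.mpr ⟨hj1, hjB⟩
    obtain ⟨hNu, hμN⟩ := Nval_update hjIcc hμ1
    have hcast1 : ((Nval B μ - 1 : ℕ) : ℚ) = ((Nval B μ : ℕ) : ℚ) - 1 := by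
      rw [Nat.cast_sub (by omega)]
      norm_num
    have hfac : ((Nval B μ - 1).factorial : ℚ) * ((Nval B μ : ℕ) : ℚ) =
        ((Nval B μ).factorial : ℚ) := by
      have h1 : Nval B μ = (Nval B μ - 1) + 1 := by omega
      conv_rhs => rw [h1]
      rw [Nat.factorial_succ]
      push_cast [hcast1]
      ring
    have hfilter : ((Finset.Icc 1 B).erase j).filter (fun k => 0 < μ k) = P.erase j := by
      ext k
      simp only [Finset.mem_filter, Finset.mem_erase, Finset.mem_Icc, hP]
      tauto
    have hzero1 : ∀ k ∈ ((Finset.Icc 1 B).erase j).filter (fun k => ¬ 0 < μ k),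
        (if k < j then wq (Function.update μ j (μ j - 1) k) (Function.update μ j (μ j - 1) j)
         else wq (Function.update μ j (μ j - 1) j) (Function.update μ j (μ j - 1) k)) = 1 := by
      intro k hk
      simp only [Finset.mem_filter, Finset.mem_erase, Finset.mem_Icc] at hk
      obtain ⟨⟨hkj, hk1, hkB⟩, hk0⟩ := hk
      have hnotlt : ¬ k < j := by
        intro hlt
        have := strict_antitone Hst k j hk1 (by omega)
        omega
      rw [if_neg hnotlt, Function.update_of_ne hkj, show μ k = 0 by omega, wq_zero]
    have hzero2 : ∀ k ∈ ((Finset.Icc 1 B).erase j).filter (fun k => ¬ 0 < μ k),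
        (if k < j then wq (μ k) (μ j) else wq (μ j) (μ k)) = 1 := by
      intro k hk
      simp only [Finset.mem_filter, Finset.mem_erase, Finset.mem_Icc] at hk
      obtain ⟨⟨hkj, hk1, hkB⟩, hk0⟩ := hk
      have hnotlt : ¬ k < j := by
        intro hlt
        have := strict_antitone Hst k j hk1 (by omega)
        omega
      rw [if_neg hnotlt, show μ k = 0 by omega, wq_zero]
    have hkey : ∏ k ∈ (Finset.Icc 1 B).erase j,
        (if k < j then wq (Function.update μ j (μ j - 1) k) (Function.update μ j (μ j - 1) j)
         else wq (Function.update μ j (μ j - 1) j) (Function.update μ j (μ j - 1) k)) =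
        (∏ k ∈ (Finset.Icc 1 B).erase j,
          (if k < j then wq (μ k) (μ j) else wq (μ j) (μ k))) *
        ∏ k ∈ P.erase j,
          (((μ j : ℚ) - (μ k : ℚ) - 1) * ((μ j : ℚ) + (μ k : ℚ))) /
            (((μ j : ℚ) - (μ k : ℚ)) * ((μ j : ℚ) + (μ k : ℚ) - 1)) := by
      rw [← Finset.prod_filter_mul_prod_filter_not ((Finset.Icc 1 B).erase j)
        (fun k => 0 < μ k)]
      conv_rhs => rw [← Finset.prod_filter_mul_prod_filter_not ((Finset.Icc 1 B).erase j)
        (fun k => 0 < μ k) (fun k => if k < j then wq (μ k) (μ j) else wq (μ j) (μ k))]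
      rw [Finset.prod_eq_one hzero1, Finset.prod_eq_one hzero2, mul_one, mul_one, hfilter]
      rw [← Finset.prod_mul_distrib]
      apply Finset.prod_congr rfl
      intro k hk
      have hk' : k ≠ j ∧ 1 ≤ k ∧ k ≤ B ∧ 0 < μ k := by
        rw [← hfilter, Finset.mem_filter, Finset.mem_erase, Finset.mem_Icc] at hk
        tauto
      obtain ⟨hkj, hk1, hkB, hk0⟩ := hk'
      rw [Function.update_of_ne hkj, Function.update_self]
      by_cases hklt : k < j
      · rw [if_pos hklt, if_pos hklt]
        have hlt : μ j < μ k := strict_lt Hst hk1 hklt (by omega)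
        exact wq_ratio_lt (μ k) (μ j) hμ1 hlt
      · rw [if_neg hklt, if_neg hklt]
        have hlt : μ k < μ j := strict_lt Hst hj1 (by omega) hk0
        exact wq_ratio_gt (μ k) (μ j) hk0 hlt
    unfold Fq
    rw [hNu, fact_inv_update hjIcc hμ1,
      W_split B (Function.update μ j (μ j - 1)) hjIcc, W_split B μ hjIcc]
    have hS0 : ∏ p ∈ (pairsB B).filter (fun p => p.1 ≠ j ∧ p.2 ≠ j),
        wq (Function.update μ j (μ j - 1) p.1) (Function.update μ j (μ j - 1) p.2) =
        ∏ p ∈ (pairsB B).filter (fun p => p.1 ≠ j ∧ p.2 ≠ j), wq (μ p.1) (μ p.2) := by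
      apply Finset.prod_congr rfl
      intro p hp
      rw [Finset.mem_filter] at hp
      rw [Function.update_of_ne hp.2.1, Function.update_of_ne hp.2.2]
    rw [hS0, hkey, ← hfac]
    set Rp := ∏ k ∈ P.erase j,
      (((μ j : ℚ) - (μ k : ℚ) - 1) * ((μ j : ℚ) + (μ k : ℚ))) /
        (((μ j : ℚ) - (μ k : ℚ)) * ((μ j : ℚ) + (μ k : ℚ) - 1)) with hRp
    field_simp
  rw [Finset.sum_congr rfl hratio]
  have h1 : ∀ j ∈ P, (1:ℚ) ≤ (μ j : ℚ) := by
    intro j hj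
    exact_mod_cast (hPmem j hj).2.2
  have hinj : Set.InjOn (fun j => (μ j : ℚ)) ↑P := by
    intro a ha b hb heq
    rw [Finset.mem_coe] at ha hb
    have haP := hPmem a ha
    have hbP := hPmem b hb
    have heq' : μ a = μ b := Nat.cast_inj.mp heq
    by_contra hne
    rcases Nat.lt_or_ge a b with h | h
    · have := strict_lt Hst haP.1 h (by omega)
      omega
    · have hba : b < a := by omega
      have := strict_lt Hst hbP.1 hba (by omega)
      omega
  have hkid := key_identity P (fun j => (μ j : ℚ)) h1 hinj
  have hsum_t : ∑ j ∈ P, (μ j : ℚ) = ((Nval B μ : ℕ) : ℚ) := by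
    rw [← Nat.cast_sum]
    congr 1
    rw [hP]
    unfold Nval
    apply Finset.sum_filter_of_ne
    intro x hx hne
    omega
  have hrw : (∑ j ∈ P, Fq B μ * ((μ j : ℚ) / ((Nval B μ : ℕ) : ℚ)) *
      ∏ k ∈ P.erase j,
        (((μ j : ℚ) - (μ k : ℚ) - 1) * ((μ j : ℚ) + (μ k : ℚ))) /
          (((μ j : ℚ) - (μ k : ℚ)) * ((μ j : ℚ) + (μ k : ℚ) - 1))) =
      (Fq B μ / ((Nval B μ : ℕ) : ℚ)) * ∑ j ∈ P, (μ j : ℚ) *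
      ∏ k ∈ P.erase j,
        (((μ j : ℚ) - (μ k : ℚ) - 1) * ((μ j : ℚ) + (μ k : ℚ))) /
          (((μ j : ℚ) - (μ k : ℚ)) * ((μ j : ℚ) + (μ k : ℚ) - 1)) := by
    rw [Finset.mul_sum]
    apply Finset.sum_congr rfl
    intro j hj
    ring
  rw [hrw, hkid, hsum_t]
  field_simp

end alg

lemma strict_update {μ : ℕ → ℕ} {j : ℕ} (Hst : StrictSh μ) (hj : 1 ≤ j)
    (hrem : Remov μ j) : StrictSh (Function.update μ j (μ j - 1)) := by
  obtain ⟨hpos, hrem2⟩ := hrem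
  intro k hk1
  by_cases hkj : k = j
  · subst hkj
    rw [Function.update_self, Function.update_of_ne (by omega)]
    rcases hrem2 with h | h
    · left; omega
    · right
      rcases Hst k hk1 with h2 | h2 <;> omega
  · rw [Function.update_of_ne hkj]
    by_cases hk1j : k + 1 = j
    · subst hk1j
      rw [Function.update_self]
      rcases Hst k hk1 with h2 | h2
      · left; omega
      · left; omega
    · rw [Function.update_of_ne hk1j]
      exact Hst k hk1

lemma supp_update {B : ℕ} {μ : ℕ → ℕ} {j : ℕ} (Hs : ∀ k, B < k → μ k = 0)
    (hjB : j ≤ B) : ∀ k, B < k → Function.update μ j (μ j - 1) k = 0 := by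
  intro k hk
  rw [Function.update_of_ne (by omega)]
  exact Hs k hk

/-- master theorem: the count equals Schur's formula -/
theorem master : ∀ (N B : ℕ) (μ : ℕ → ℕ), (∀ j, B < j → μ j = 0) → StrictSh μ →
    Nval B μ = N → ((Fill (cellOf μ) (Nval B μ)).ncard : ℚ) = Fq B μ := by
  intro N
  induction N using Nat.strong_induction_on with
  | _ N ih =>
    intro B μ Hs Hst hNval
    rcases Nat.eq_zero_or_pos N with h0 | hpos
    · subst h0
      have hnocell : ∀ i j, ¬ cellOf μ i j := by
        intro i j hc
        obtain ⟨h1, h2, h3, h4, h5⟩ := cell_bounds Hs hc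
        omega
      have hset : Fill (cellOf μ) (Nval B μ) = {fun _ _ => 0} := by
        ext π
        simp only [Set.mem_singleton_iff]
        constructor
        · intro hπ
          funext a b
          exact hπ.1 a b (hnocell a b)
        · intro hπ
          subst hπ
          refine ⟨fun i j _ => rfl, fun i j hc => absurd hc (hnocell i j), ?_,
            fun i j hc _ => absurd hc (hnocell i j),
            fun i j hc _ => absurd hc (hnocell i j),
            fun i j hc _ => absurd hc (hnocell i (j+1))⟩
          intro v hv
          rw [hNval] at hv
          omega
      rw [hset, Set.ncard_singleton]
      have hμ0 : ∀ j ∈ Finset.Icc 1 B, μ j = 0 := by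
        intro j hj
        by_contra h
        have h2 : μ j ≤ Nval B μ :=
          Finset.single_le_sum (f := μ) (fun k _ => Nat.zero_le _) hj
        omega
      unfold Fq
      rw [show Nval B μ = 0 from hNval]
      rw [Finset.prod_eq_one (fun j hj => by rw [hμ0 j hj]; norm_num),
        Finset.prod_eq_one (fun p hp => by
          rw [hμ0 p.2 (Finset.mem_Icc.mpr (by
            have := pairsB_mem.mp hp
            omega))]
          exact wq_zero _)]
      norm_num
    · have hNpos : 0 < Nval B μ := by omega
      rw [card_rec Hs Hst hNpos]
      push_cast
      have hterm : ∀ j ∈ (Finset.Icc 1 B).filter (fun j => Remov μ j),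
          ((Fill (cellOf (Function.update μ j (μ j - 1)))
            (Nval B (Function.update μ j (μ j - 1)))).ncard : ℚ) =
          Fq B (Function.update μ j (μ j - 1)) := by
        intro j hj
        rw [Finset.mem_filter, Finset.mem_Icc] at hj
        obtain ⟨⟨hj1, hjB⟩, hrem⟩ := hj
        have hjIcc : j ∈ Finset.Icc 1 B := Finset.mem_Icc.mpr ⟨hj1, hjB⟩
        obtain ⟨hNu, hμN⟩ := Nval_update hjIcc hrem.1
        exact ih (N - 1) (by omega) B _ (supp_update Hs hjB) (strict_update Hst hj1 hrem)
          (by omega)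
      rw [Finset.sum_congr rfl hterm]
      have hsub : (Finset.Icc 1 B).filter (fun j => Remov μ j) ⊆
          (Finset.Icc 1 B).filter (fun j => 0 < μ j) := by
        intro j hj
        rw [Finset.mem_filter] at *
        exact ⟨hj.1, hj.2.1⟩
      rw [Finset.sum_subset hsub ?_]
      · exact (Fq_rec Hs Hst hNpos).symm
      · intro j hj hnj
        rw [Finset.mem_filter, Finset.mem_Icc] at hj
        have hnrem : ¬ Remov μ j := by
          intro h
          exact hnj (Finset.mem_filter.mpr ⟨Finset.mem_Icc.mpr ⟨hj.1.1, hj.1.2⟩, h⟩)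
        unfold Remov at hnrem
        push_neg at hnrem
        obtain ⟨⟨hj1, hjB⟩, hjpos⟩ := hj
        obtain ⟨h2, h3⟩ := hnrem hjpos
        have h4 : μ (j + 1) = μ j - 1 := by
          rcases Hst j hj1 with h | h <;> omega
        apply Fq_vanish (supp_update Hs hjB) hj1 (j := j)
        · rw [Function.update_of_ne (show j + 1 ≠ j by omega)]
          omega
        · rw [Function.update_self, Function.update_of_ne (show j + 1 ≠ j by omega)]
          omega

lemma prod_Icc_reflect {M : Type*} [CommMonoid M] (n : ℕ) (f : ℕ → M) :
    ∏ j ∈ Finset.Icc 1 n, f (n + 1 - j) = ∏ j ∈ Finset.Icc 1 n, f j := by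
  apply Finset.prod_nbij' (i := fun j => n + 1 - j) (j := fun j => n + 1 - j) <;>
    intro a ha <;> simp only [Finset.mem_Icc] at * <;> try omega

lemma sum_Icc_reflect (n : ℕ) (f : ℕ → ℕ) :
    ∑ j ∈ Finset.Icc 1 n, f (n + 1 - j) = ∑ j ∈ Finset.Icc 1 n, f j := by
  apply Finset.sum_nbij' (i := fun j => n + 1 - j) (j := fun j => n + 1 - j) <;>
    intro a ha <;> simp only [Finset.mem_Icc] at * <;> try omega

/-- the staircase column heights -/
def stair (n : ℕ) : ℕ → ℕ := fun j => if 1 ≤ j ∧ j ≤ n then n + 1 - j else 0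

lemma sum_Icc_gauss (n : ℕ) : ∑ j ∈ Finset.Icc 1 n, j = n * (n + 1) / 2 := by
  induction n with
  | zero => simp
  | succ m ih =>
    rw [Finset.sum_Icc_succ_top (by omega), ih]
    have h2 : m * (m + 1) % 2 = 0 := Nat.even_iff.mp (Nat.even_mul_succ_self m)
    have h3 : (m + 1) * (m + 1 + 1) = m * (m + 1) + 2 * (m + 1) := by ring
    omega

lemma stair_Nval (n : ℕ) : Nval n (stair n) = n * (n + 1) / 2 := by
  unfold Nval
  have h1 : ∀ j ∈ Finset.Icc 1 n, stair n j = n + 1 - j := by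
    intro j hj
    simp only [Finset.mem_Icc] at hj
    unfold stair
    rw [if_pos ⟨hj.1, hj.2⟩]
  rw [Finset.sum_congr rfl h1, sum_Icc_reflect n (fun j => j), sum_Icc_gauss]

lemma prod_pairs_reflect (n : ℕ) (g : ℕ → ℕ → ℚ) :
    ∏ p ∈ pairsB n, g p.1 p.2 = ∏ p ∈ pairsB n, g (n + 1 - p.2) (n + 1 - p.1) := by
  refine Finset.prod_nbij' (fun p => (n + 1 - p.2, n + 1 - p.1))
    (fun p => (n + 1 - p.2, n + 1 - p.1)) ?_ ?_ ?_ ?_ ?_ <;>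
    intro a ha <;> simp only [pairsB_mem, Prod.ext_iff] at *
  · omega
  · omega
  · constructor <;> omega
  · constructor <;> omega
  · have e1 : n + 1 - (n + 1 - a.1) = a.1 := by omega
    have e2 : n + 1 - (n + 1 - a.2) = a.2 := by omega
    simp only [e1, e2]

lemma prod_pairs_step (n : ℕ) (g : ℕ × ℕ → ℚ) :
    ∏ p ∈ pairsB (n + 1), g p =
      (∏ p ∈ pairsB n, g p) * ∏ c ∈ Finset.Icc 1 n, g (c, n + 1) := by
  have hsplit : pairsB (n + 1) =
      pairsB n ∪ (Finset.Icc 1 n).image (fun c => (c, n + 1)) := by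
    ext p
    simp only [Finset.mem_union, Finset.mem_image, Finset.mem_Icc, pairsB_mem]
    constructor
    · rintro ⟨h1, h2, h3, h4, h5⟩
      rcases Nat.lt_or_ge p.2 (n + 1) with h | h
      · left; omega
      · right
        refine ⟨p.1, by omega, ?_⟩
        rw [Prod.ext_iff]
        constructor <;> simp <;> omega
    · rintro (⟨h1, h2, h3, h4, h5⟩ | ⟨c, hc, rfl⟩)
      · omega
      · simp; omega
  rw [hsplit, Finset.prod_union, Finset.prod_image]
  · intro a _ b _ hab
    simpa using hab
  · rw [Finset.disjoint_right]
    rintro p hp hp2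
    simp only [Finset.mem_image, Finset.mem_Icc] at hp
    obtain ⟨c, hc, rfl⟩ := hp
    rw [pairsB_mem] at hp2
    simp only at hp2
    omega

lemma prod_shift (a : ℕ) : ∀ n : ℕ,
    ∏ c ∈ Finset.Icc 1 n, ((a : ℚ) + c) = (Nat.factorial (a + n) : ℚ) / (Nat.factorial a : ℚ)
  | 0 => by
    rw [Nat.add_zero, div_self (Nat.cast_ne_zero.mpr (Nat.factorial_ne_zero a)),
      Finset.Icc_eq_empty (by omega : ¬ (1:ℕ) ≤ 0), Finset.prod_empty]
  | (n+1) => by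
    rw [Finset.prod_Icc_succ_top (by omega), prod_shift a n]
    have h1 : (Nat.factorial a : ℚ) ≠ 0 := Nat.cast_ne_zero.mpr (Nat.factorial_ne_zero a)
    have h2 : (Nat.factorial (a + (n+1)) : ℚ) = (Nat.factorial (a + n) : ℚ) * ((a : ℚ) + (n+1)) := by
      have h3 : a + (n + 1) = (a + n) + 1 := by omega
      rw [h3, Nat.factorial_succ]
      push_cast
      ring
    rw [h2]
    field_simp
    push_cast
    ring

lemma prod_Icc_id_fact (n : ℕ) :
    ∏ c ∈ Finset.Icc 1 n, (c : ℚ) = (Nat.factorial n : ℚ) := by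
  have h := prod_shift 0 n
  simp only [Nat.cast_zero, zero_add, Nat.factorial_zero, Nat.cast_one, div_one] at h
  exact h

lemma stair_prod_main : ∀ n : ℕ,
    (∏ k ∈ Finset.Icc 1 n, (Nat.factorial k : ℚ))⁻¹ *
      ∏ p ∈ pairsB n, (((p.2 : ℚ) - p.1) / ((p.2 : ℚ) + p.1)) =
    (∏ k ∈ Finset.range n, (Nat.factorial k : ℚ)) /
      ∏ k ∈ Finset.range n, (Nat.factorial (2 * k + 1) : ℚ)
  | 0 => by simp [pairsB]
  | (n+1) => by
    have ih := stair_prod_main n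
    rw [Finset.prod_Icc_succ_top (show 1 ≤ n + 1 by omega),
      prod_pairs_step n (fun p => (((p.2 : ℚ) - p.1) / ((p.2 : ℚ) + p.1))),
      Finset.prod_range_succ, Finset.prod_range_succ]
    have h1 : (Nat.factorial (n+1) : ℚ) ≠ 0 := Nat.cast_ne_zero.mpr (Nat.factorial_ne_zero _)
    have h2 : (Nat.factorial (2*n+1) : ℚ) ≠ 0 := Nat.cast_ne_zero.mpr (Nat.factorial_ne_zero _)
    have hnfne : (Nat.factorial n : ℚ) ≠ 0 := Nat.cast_ne_zero.mpr (Nat.factorial_ne_zero _)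
    have hnum : ∏ c ∈ Finset.Icc 1 n, (((n + 1 : ℕ) : ℚ) - (c : ℚ)) =
        (Nat.factorial n : ℚ) := by
      have hc1 : ∀ c ∈ Finset.Icc 1 n, (((n + 1 : ℕ) : ℚ) - (c : ℚ)) = ((n + 1 - c : ℕ) : ℚ) := by
        intro c hc
        simp only [Finset.mem_Icc] at hc
        rw [Nat.cast_sub (by omega : c ≤ n + 1)]
      rw [Finset.prod_congr rfl hc1, prod_Icc_reflect n (fun c => ((c : ℕ) : ℚ)),
        prod_Icc_id_fact]
    have hden : ∏ c ∈ Finset.Icc 1 n, (((n + 1 : ℕ) : ℚ) + (c : ℚ)) =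
        (Nat.factorial (2 * n + 1) : ℚ) / (Nat.factorial (n + 1) : ℚ) := by
      have h := prod_shift (n + 1) n
      rw [show n + 1 + n = 2 * n + 1 by omega] at h
      exact h
    have hstep : ∏ c ∈ Finset.Icc 1 n,
        ((fun p : ℕ × ℕ => (((p.2 : ℚ) - p.1) / ((p.2 : ℚ) + p.1))) (c, n+1)) =
        (Nat.factorial n : ℚ) * (Nat.factorial (n + 1) : ℚ) / (Nat.factorial (2 * n + 1) : ℚ) := by
      simp only
      rw [Finset.prod_div_distrib, hnum, hden]
      field_simp
    rw [hstep]
    set K := ∏ k ∈ Finset.Icc 1 n, (Nat.factorial k : ℚ) with hK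
    set Cp := ∏ p ∈ pairsB n, (((p.2 : ℚ) - p.1) / ((p.2 : ℚ) + p.1)) with hCp
    set G := ∏ k ∈ Finset.range n, (Nat.factorial k : ℚ) with hG
    set H := ∏ k ∈ Finset.range n, (Nat.factorial (2 * k + 1) : ℚ) with hH
    have hKne : K ≠ 0 :=
      Finset.prod_ne_zero_iff.mpr (fun k _ => Nat.cast_ne_zero.mpr (Nat.factorial_ne_zero _))
    have hHne : H ≠ 0 :=
      Finset.prod_ne_zero_iff.mpr (fun k _ => Nat.cast_ne_zero.mpr (Nat.factorial_ne_zero _))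
    have hCval : Cp = K * (G / H) := by
      rw [← ih]
      field_simp
    rw [hCval]
    field_simp

lemma Fq_stair (n : ℕ) :
    Fq n (stair n) =
      (Nat.factorial (n * (n + 1) / 2) : ℚ) *
        (∏ k ∈ Finset.range n, (Nat.factorial k : ℚ)) /
        ∏ k ∈ Finset.range n, (Nat.factorial (2 * k + 1) : ℚ) := by
  unfold Fq
  rw [stair_Nval]
  have hA : ∏ j ∈ Finset.Icc 1 n, ((Nat.factorial (stair n j) : ℚ))⁻¹ =
      (∏ k ∈ Finset.Icc 1 n, (Nat.factorial k : ℚ))⁻¹ := by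
    have hc : ∀ j ∈ Finset.Icc 1 n, ((Nat.factorial (stair n j) : ℚ))⁻¹ =
        ((Nat.factorial (n + 1 - j) : ℚ))⁻¹ := by
      intro j hj
      simp only [Finset.mem_Icc] at hj
      unfold stair
      rw [if_pos ⟨hj.1, hj.2⟩]
    rw [Finset.prod_congr rfl hc,
      prod_Icc_reflect n (fun j => ((Nat.factorial j : ℚ))⁻¹), ← Finset.prod_inv_distrib]
  have hP : ∏ p ∈ pairsB n, wq (stair n p.1) (stair n p.2) =
      ∏ p ∈ pairsB n, (((p.2 : ℚ) - p.1) / ((p.2 : ℚ) + p.1)) := by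
    rw [prod_pairs_reflect n (fun a b => wq (stair n a) (stair n b))]
    apply Finset.prod_congr rfl
    intro p hp
    rw [pairsB_mem] at hp
    have e1 : stair n (n + 1 - p.2) = p.2 := by
      unfold stair
      rw [if_pos (by omega)]
      omega
    have e2 : stair n (n + 1 - p.1) = p.1 := by
      unfold stair
      rw [if_pos (by omega)]
      omega
    rw [e1, e2]
    unfold wq
    rw [if_neg (by omega)]
  rw [hA, hP, mul_assoc, stair_prod_main n, mul_div_assoc]

end SP18

namespace GPS

/-- `(i,j)` is a cell of the staircase shape `δ_n = (n, n-1, …, 1)`: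
`1 ≤ i ≤ n` and `1 ≤ j ≤ n+1-i`. -/
def Dcell (n i j : ℕ) : Prop := 1 ≤ i ∧ i ≤ n ∧ 1 ≤ j ∧ j ≤ n + 1 - i

/-- With `N = n(n+1)/2`, the number of fillings of `δ_n` using
each value of `{0,…,N-1}` exactly once, strictly decreasing along rows and
columns and strictly increasing along southwest–northeast diagonals, equals
`N! · (1!·2!⋯(n-1)!) / (1!·3!⋯(2n-1)!)`. -/
theorem statement18 (n : ℕ) (hn : 0 < n) :
    (Set.ncard { π : ℕ → ℕ → ℕ |
      (∀ i j, ¬ Dcell n i j → π i j = 0) ∧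
      (∀ i j, Dcell n i j → π i j < n * (n + 1) / 2) ∧
      (∀ v, v < n * (n + 1) / 2 → ∃! p : ℕ × ℕ, Dcell n p.1 p.2 ∧ π p.1 p.2 = v) ∧
      (∀ i j, Dcell n i j → Dcell n i (j + 1) → π i (j + 1) < π i j) ∧
      (∀ i j, Dcell n i j → Dcell n (i + 1) j → π (i + 1) j < π i j) ∧
      (∀ i j, Dcell n i (j + 1) → Dcell n (i + 1) j → π i (j + 1) < π (i + 1) j) } : ℚ) =
    (Nat.factorial (n * (n + 1) / 2) : ℚ) *
      (∏ k ∈ Finset.range n, (Nat.factorial k : ℚ)) /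
      ∏ k ∈ Finset.range n, (Nat.factorial (2 * k + 1) : ℚ) := by
  have hcell : Dcell n = SP18.cellOf (SP18.stair n) := by
    funext i j
    apply propext
    unfold Dcell SP18.cellOf SP18.stair
    constructor
    · rintro ⟨h1, h2, h3, h4⟩
      refine ⟨h1, h3, ?_⟩
      have : j ≤ n := by omega
      simp only [h3, this, and_self, if_pos]
      omega
    · rintro ⟨h1, h2, h3⟩
      rcases Nat.lt_or_ge n j with hj | hj
      · rw [if_neg (by omega)] at h3; omega
      · rw [if_pos ⟨h2, hj⟩] at h3; omega
  have hset : { π : ℕ → ℕ → ℕ |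
      (∀ i j, ¬ Dcell n i j → π i j = 0) ∧
      (∀ i j, Dcell n i j → π i j < n * (n + 1) / 2) ∧
      (∀ v, v < n * (n + 1) / 2 → ∃! p : ℕ × ℕ, Dcell n p.1 p.2 ∧ π p.1 p.2 = v) ∧
      (∀ i j, Dcell n i j → Dcell n i (j + 1) → π i (j + 1) < π i j) ∧
      (∀ i j, Dcell n i j → Dcell n (i + 1) j → π (i + 1) j < π i j) ∧
      (∀ i j, Dcell n i (j + 1) → Dcell n (i + 1) j → π i (j + 1) < π (i + 1) j) }
      = SP18.Fill (SP18.cellOf (SP18.stair n)) (SP18.Nval n (SP18.stair n)) := by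
    rw [← hcell, SP18.stair_Nval]
    rfl
  rw [hset, SP18.master (SP18.Nval n (SP18.stair n)) n (SP18.stair n) ?_ ?_ rfl,
    SP18.Fq_stair]
  · intro j hj
    unfold SP18.stair
    have : ¬ (1 ≤ j ∧ j ≤ n) := by omega
    simp [this]
  · intro j hj
    unfold SP18.stair
    by_cases h2 : j + 1 ≤ n
    · left
      simp only [show 1 ≤ j + 1 ∧ j + 1 ≤ n from ⟨by omega, h2⟩, and_self, if_pos,
        show 1 ≤ j ∧ j ≤ n from ⟨hj, by omega⟩]
      omega
    · right
      have : ¬ (1 ≤ j + 1 ∧ j + 1 ≤ n) := by omega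
      rw [if_neg this]

end GPS
end

section
/- For all positive integers n and m, with a = (1,1,…,1) ∈ ℕ^n and b = (0,1,1,…,1) ∈ ℕ^n (b_1 = 0 and b_i = 1 for 2 ≤ i ≤ n), the number of extreme points of the flow polytope F_{G(n,m)}(a,b) equals (m+1)^n. -/
open scoped BigOperators Classical

namespace GPS
section
variable {n m : ℕ}

lemma pairEq {k l : ℕ} {a c : Fin k} {b d : Fin l} (h1 : (a:ℕ) = (c:ℕ)) (h2 : (b:ℕ) = (d:ℕ)) :
    (a, b) = (c, d) := by
  cases Fin.ext h1; cases Fin.ext h2; rfl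

lemma pairNeFst {k l : ℕ} {a c : Fin k} {b d : Fin l} (h : (a:ℕ) ≠ (c:ℕ)) : (a, b) ≠ (c, d) :=
  fun hc => h (congrArg (fun p : Fin k × Fin l => ((p.1 : ℕ))) hc)

lemma sum_eq_two {β : Type*} [Fintype β] [DecidableEq β] (g : β → ℝ) (a b : β) (hab : a ≠ b)
    (h0 : ∀ c, c ≠ a → c ≠ b → g c = 0) : ∑ c, g c = g a + g b := by
  have : ∀ c : β, g c = (if c = a then g a else 0) + (if c = b then g b else 0) := by
    intro c
    by_cases h1 : c = a
    · subst h1; simp [hab]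
    · by_cases h2 : c = b
      · subst h2; simp [h1]
      · simp [h1, h2, h0 c h1 h2]
  rw [Finset.sum_congr rfl fun c _ => this c, Finset.sum_add_distrib]
  simp

lemma sum_eq_one_term' {β : Type*} [Fintype β] [DecidableEq β] (g : β → ℝ) (a : β)
    (h0 : ∀ c, c ≠ a → g c = 0) : ∑ c, g c = g a :=
  Finset.sum_eq_single a (fun c _ hc => h0 c hc) (by simp)

/-- vertical flow out of `(i,j)` (or sink flow for the last row). -/
def Psi (f : Vtx n m → Vtx n m → ℝ) (i : Fin n) (j : Fin (m + 1)) : ℝ :=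
  if h : (i : ℕ) + 1 < n then f (some (i, j)) (some (⟨(i : ℕ) + 1, h⟩, j))
  else f (some (i, j)) none

lemma outSum (f : Vtx n m → Vtx n m → ℝ)
    (hZ : ∀ u v, ¬ IsEdge n m u v → f u v = 0) (i : Fin n) (j : Fin (m+1)) :
    ∑ w, f (some (i,j)) w =
      (if h : (j:ℕ) < m then f (some (i,j)) (some (i, ⟨(j:ℕ)+1, Nat.succ_lt_succ h⟩)) else 0) +
      Psi f i j := by
  rw [Fintype.sum_option]
  by_cases hi : (i : ℕ) + 1 < n
  · have hnone : f (some (i,j)) none = 0 := by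
      apply hZ; show ¬ ((i:ℕ) = n - 1); omega
    rw [hnone, zero_add, Psi, dif_pos hi]
    by_cases hj : (j : ℕ) < m
    · rw [dif_pos hj]
      apply sum_eq_two (fun p : Fin n × Fin (m+1) => f (some (i,j)) (some p))
        (i, (⟨(j:ℕ)+1, Nat.succ_lt_succ hj⟩ : Fin (m+1))) (⟨(i:ℕ)+1, hi⟩, j)
      · exact pairNeFst (by show (i:ℕ) ≠ (i:ℕ)+1; omega)
      · rintro ⟨i', j'⟩ h1 h2
        apply hZ
        rintro (⟨rfl, hj'⟩ | ⟨hi', rfl⟩)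
        · exact h1 (pairEq rfl hj')
        · exact h2 (pairEq hi' rfl)
    · rw [dif_neg hj, zero_add]
      apply sum_eq_one_term' (fun p : Fin n × Fin (m+1) => f (some (i,j)) (some p))
        (⟨(i:ℕ)+1, hi⟩, j)
      rintro ⟨i', j'⟩ h2
      apply hZ
      rintro (⟨rfl, hj'⟩ | ⟨hi', rfl⟩)
      · have := j'.isLt; omega
      · exact h2 (pairEq hi' rfl)
  · rw [Psi, dif_neg hi, add_comm (f _ none)]
    congr 1
    by_cases hj : (j : ℕ) < m
    · rw [dif_pos hj]
      apply sum_eq_one_term' (fun p : Fin n × Fin (m+1) => f (some (i,j)) (some p))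
        (i, (⟨(j:ℕ)+1, Nat.succ_lt_succ hj⟩ : Fin (m+1)))
      rintro ⟨i', j'⟩ h1
      apply hZ
      rintro (⟨rfl, hj'⟩ | ⟨hi', rfl⟩)
      · exact h1 (pairEq rfl hj')
      · have := i'.isLt; omega
    · rw [dif_neg hj]
      apply Finset.sum_eq_zero
      rintro ⟨i', j'⟩ _
      apply hZ
      rintro (⟨rfl, hj'⟩ | ⟨hi', rfl⟩)
      · have := j'.isLt; omega
      · have := i'.isLt; omega

lemma inSum (f : Vtx n m → Vtx n m → ℝ)
    (hZ : ∀ u v, ¬ IsEdge n m u v → f u v = 0) (i : Fin n) (j : Fin (m+1)) :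
    ∑ w, f w (some (i,j)) =
      (if h : 0 < (j:ℕ) then
        f (some (i, ⟨(j:ℕ)-1, lt_of_le_of_lt (Nat.sub_le _ _) j.isLt⟩)) (some (i,j)) else 0) +
      (if h : 0 < (i:ℕ) then
        f (some (⟨(i:ℕ)-1, lt_of_le_of_lt (Nat.sub_le _ _) i.isLt⟩, j)) (some (i,j)) else 0) := by
  rw [Fintype.sum_option]
  have hnone : f none (some (i,j)) = 0 := hZ _ _ (by exact fun h => h)
  rw [hnone, zero_add]
  by_cases hj : 0 < (j : ℕ) <;> by_cases hi : 0 < (i : ℕ)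
  · rw [dif_pos hj, dif_pos hi]
    apply sum_eq_two (fun p : Fin n × Fin (m+1) => f (some p) (some (i,j)))
      (i, (⟨(j:ℕ)-1, lt_of_le_of_lt (Nat.sub_le _ _) j.isLt⟩ : Fin (m+1)))
      ((⟨(i:ℕ)-1, lt_of_le_of_lt (Nat.sub_le _ _) i.isLt⟩ : Fin n), j)
    · exact pairNeFst (by show (i:ℕ) ≠ (i:ℕ)-1; omega)
    · rintro ⟨i', j'⟩ h1 h2
      apply hZ
      rintro (⟨rfl, hj'⟩ | ⟨hi', rfl⟩)
      · exact h1 (pairEq rfl (by show (j':ℕ) = (j:ℕ)-1; omega))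
      · exact h2 (pairEq (by show (i':ℕ) = (i:ℕ)-1; omega) rfl)
  · rw [dif_pos hj, dif_neg hi, add_zero]
    apply sum_eq_one_term' (fun p : Fin n × Fin (m+1) => f (some p) (some (i,j)))
      (i, (⟨(j:ℕ)-1, lt_of_le_of_lt (Nat.sub_le _ _) j.isLt⟩ : Fin (m+1)))
    rintro ⟨i', j'⟩ h1
    apply hZ
    rintro (⟨rfl, hj'⟩ | ⟨hi', rfl⟩)
    · exact h1 (pairEq rfl (by show (j':ℕ) = (j:ℕ)-1; omega))
    · omega
  · rw [dif_neg hj, dif_pos hi, zero_add]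
    apply sum_eq_one_term' (fun p : Fin n × Fin (m+1) => f (some p) (some (i,j)))
      ((⟨(i:ℕ)-1, lt_of_le_of_lt (Nat.sub_le _ _) i.isLt⟩ : Fin n), j)
    rintro ⟨i', j'⟩ h2
    apply hZ
    rintro (⟨rfl, hj'⟩ | ⟨hi', rfl⟩)
    · omega
    · exact h2 (pairEq (by show (i':ℕ) = (i:ℕ)-1; omega) rfl)
  · rw [dif_neg hj, dif_neg hi, add_zero]
    apply Finset.sum_eq_zero
    rintro ⟨i', j'⟩ _
    apply hZ
    rintro (⟨rfl, hj'⟩ | ⟨hi', rfl⟩)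
    · omega
    · omega

lemma sinkInSum (f : Vtx n m → Vtx n m → ℝ)
    (hZ : ∀ u v, ¬ IsEdge n m u v → f u v = 0) (hn : 0 < n) :
    ∑ w, f w none = ∑ j : Fin (m+1), f (some (⟨n-1, by omega⟩, j)) none := by
  rw [Fintype.sum_option]
  have hnone : f none none = 0 := hZ _ _ (by exact fun h => h)
  rw [hnone, zero_add, Fintype.sum_prod_type]
  apply sum_eq_one_term' (fun i' => ∑ j' : Fin (m+1), f (some (i', j')) none)
    (⟨n-1, by omega⟩ : Fin n)
  intro i' hi'
  apply Finset.sum_eq_zero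
  intro j' _
  apply hZ
  show ¬ ((i' : ℕ) = n - 1)
  intro h; exact hi' (Fin.ext h)

lemma sinkOutSum (f : Vtx n m → Vtx n m → ℝ)
    (hZ : ∀ u v, ¬ IsEdge n m u v → f u v = 0) :
    ∑ w, f none w = 0 :=
  Finset.sum_eq_zero fun w _ => hZ _ _ (by cases w <;> exact fun h => h)

/-- cumulative vertical flow `v i 0 + ⋯ + v i j`. -/
def PV (v : Fin n → Fin (m+1) → ℝ) (i : Fin n) (j : Fin (m+1)) : ℝ :=
  ∑ k : Fin (m+1), if (k:ℕ) ≤ (j:ℕ) then v i k else 0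

def Pprev (v : Fin n → Fin (m+1) → ℝ) (i : Fin n) (j : Fin (m+1)) : ℝ :=
  if h : 0 < (i:ℕ) then PV v ⟨(i:ℕ)-1, lt_of_le_of_lt (Nat.sub_le _ _) i.isLt⟩ j else 0

def Hval (v : Fin n → Fin (m+1) → ℝ) (i : Fin n) (j : Fin (m+1)) : ℝ :=
  1 - PV v i j + Pprev v i j

def Phi (v : Fin n → Fin (m+1) → ℝ) : Vtx n m → Vtx n m → ℝ
  | some (i,j), some (i',j') =>
      if (i':ℕ) = (i:ℕ) ∧ (j':ℕ) = (j:ℕ)+1 then Hval v i j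
      else if (i':ℕ) = (i:ℕ)+1 ∧ (j':ℕ) = (j:ℕ) then v i j
      else 0
  | some (i,j), none => if (i:ℕ) = n-1 then v i j else 0
  | none, _ => 0

def Qset (n m : ℕ) : Set (Fin n → Fin (m+1) → ℝ) :=
  {v | (∀ i j, 0 ≤ v i j) ∧ ∀ i, ∑ j, v i j = 1}

lemma PV_zero (v : Fin n → Fin (m+1) → ℝ) (i : Fin n) (j : Fin (m+1)) (hj : (j:ℕ) = 0) :
    PV v i j = v i j := by
  rw [PV, hj]
  rw [sum_eq_one_term' _ j]
  · simp [hj]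
  · intro c hc
    rw [if_neg]
    intro hc0
    exact hc (Fin.ext (by omega))

lemma PV_pred (v : Fin n → Fin (m+1) → ℝ) (i : Fin n) (j : Fin (m+1)) (hj : 0 < (j:ℕ)) :
    PV v i j = PV v i ⟨(j:ℕ)-1, lt_of_le_of_lt (Nat.sub_le _ _) j.isLt⟩ + v i j := by
  rw [PV, PV]
  have : ∀ k : Fin (m+1), (if (k:ℕ) ≤ (j:ℕ) then v i k else 0) =
      (if (k:ℕ) ≤ (j:ℕ)-1 then v i k else 0) + (if k = j then v i k else 0) := by
    intro k
    by_cases h1 : (k:ℕ) ≤ (j:ℕ)-1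
    · rw [if_pos h1, if_pos (by omega), if_neg (fun h => by subst h; omega)]
      ring
    · by_cases h2 : k = j
      · subst h2; rw [if_pos le_rfl, if_neg h1, if_pos rfl]; ring
      · have : ¬ (k:ℕ) ≤ (j:ℕ) := by
          intro h; exact h2 (Fin.ext (by omega))
        rw [if_neg this, if_neg h1, if_neg h2]; ring
  rw [Finset.sum_congr rfl fun k _ => this k, Finset.sum_add_distrib]
  congr 1
  rw [sum_eq_one_term' _ j (fun c hc => if_neg hc), if_pos rfl]

lemma PV_top (v : Fin n → Fin (m+1) → ℝ) (i : Fin n) (j : Fin (m+1)) (hj : (j:ℕ) = m) :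
    PV v i j = ∑ k, v i k := by
  apply Finset.sum_congr rfl
  intro k _
  rw [if_pos (by omega)]

lemma PV_nonneg (v : Fin n → Fin (m+1) → ℝ) (hv : ∀ i j, 0 ≤ v i j) (i : Fin n) (j : Fin (m+1)) :
    0 ≤ PV v i j :=
  Finset.sum_nonneg fun k _ => by split <;> [exact hv i k; exact le_rfl]

lemma PV_le_one (v : Fin n → Fin (m+1) → ℝ) {i' : Fin n} (hv : ∀ i j, 0 ≤ v i j)
    (hs : ∑ k, v i' k = 1) (j : Fin (m+1)) : PV v i' j ≤ 1 := by
  rw [← hs]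
  apply Finset.sum_le_sum
  intro k _
  split <;> [exact le_rfl; exact hv i' k]

lemma Phi_zero (v : Fin n → Fin (m+1) → ℝ) (u w : Vtx n m) (h : ¬ IsEdge n m u w) :
    Phi v u w = 0 := by
  match u, w with
  | none, w => rfl
  | some (i,j), none =>
      rw [Phi, if_neg]; exact h
  | some (i,j), some (i',j') =>
      rw [Phi]
      rw [if_neg, if_neg]
      · rintro ⟨h1, h2⟩; exact h (Or.inr ⟨h1, Fin.ext h2.symm⟩)
      · rintro ⟨h1, h2⟩; exact h (Or.inl ⟨(Fin.ext h1).symm, h2⟩)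

lemma Phi_hor (v : Fin n → Fin (m+1) → ℝ) (i : Fin n) (j : Fin (m+1)) (hj : (j:ℕ) < m) :
    Phi v (some (i,j)) (some (i, ⟨(j:ℕ)+1, Nat.succ_lt_succ hj⟩)) = Hval v i j := by
  rw [Phi, if_pos ⟨rfl, rfl⟩]

lemma Phi_hor_in (v : Fin n → Fin (m+1) → ℝ) (i : Fin n) (j : Fin (m+1)) (hj : 0 < (j:ℕ)) :
    Phi v (some (i, ⟨(j:ℕ)-1, lt_of_le_of_lt (Nat.sub_le _ _) j.isLt⟩)) (some (i,j)) =
      Hval v i ⟨(j:ℕ)-1, lt_of_le_of_lt (Nat.sub_le _ _) j.isLt⟩ := by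
  rw [Phi, if_pos ⟨rfl, by show (j:ℕ) = (j:ℕ)-1+1; omega⟩]

lemma Phi_vert_in (v : Fin n → Fin (m+1) → ℝ) (i : Fin n) (j : Fin (m+1)) (hi : 0 < (i:ℕ)) :
    Phi v (some (⟨(i:ℕ)-1, lt_of_le_of_lt (Nat.sub_le _ _) i.isLt⟩, j)) (some (i,j)) =
      v ⟨(i:ℕ)-1, lt_of_le_of_lt (Nat.sub_le _ _) i.isLt⟩ j := by
  rw [Phi, if_neg, if_pos]
  · exact ⟨by show (i:ℕ) = (i:ℕ)-1+1; omega, rfl⟩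
  · rintro ⟨h1, h2⟩; omega

lemma Psi_Phi (v : Fin n → Fin (m+1) → ℝ) (i : Fin n) (j : Fin (m+1)) :
    Psi (Phi v) i j = v i j := by
  rw [Psi]
  by_cases hi : (i:ℕ)+1 < n
  · rw [dif_pos hi, Phi, if_neg (by rintro ⟨h1, h2⟩; omega), if_pos ⟨rfl, rfl⟩]
  · rw [dif_neg hi, Phi, if_pos (by have := i.isLt; omega)]

lemma memP (hn : 0 < n) (hm : 0 < m) {v : Fin n → Fin (m+1) → ℝ} (hv : v ∈ Qset n m) :
    Phi v ∈ FlowPolytope n m (fun _ => 1) (fun i => if (i:ℕ) = 0 then 0 else 1) := by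
  obtain ⟨hpos, hsum⟩ := hv
  have hZ : ∀ u w, ¬ IsEdge n m u w → Phi v u w = 0 := Phi_zero v
  have hnet : ∀ (i : Fin n) (j : Fin (m+1)),
      netflow n m (fun _ => 1) (fun i : Fin n => if (i:ℕ)=0 then 0 else 1) (some (i,j)) =
      (if (j:ℕ)=0 then (1:ℝ) else 0) -
        (if (j:ℕ)=m then (if (i:ℕ)=0 then (0:ℝ) else 1) else 0) := by
    intro i j
    show (if (j:ℕ)=0 then ((1:ℕ):ℝ) else 0) -
        (if (j:ℕ)=m then ((if (i:ℕ)=0 then 0 else 1 : ℕ):ℝ) else 0) = _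
    congr 1
    · norm_num
    · split_ifs <;> norm_num
  refine ⟨hZ, ?_, ?_⟩
  · intro u w
    match u, w with
    | none, w => exact le_rfl
    | some (i,j), none =>
        rw [Phi]; split
        · exact hpos i j
        · exact le_rfl
    | some (i,j), some (i',j') =>
        rw [Phi]; split
        · rw [Hval, Pprev]
          have h1 : PV v i j ≤ 1 := PV_le_one v hpos (hsum i) j
          split
          · have h2 := PV_nonneg v hpos ⟨(i:ℕ)-1, lt_of_le_of_lt (Nat.sub_le _ _) i.isLt⟩ j
            linarith
          · linarith
        · split
          · exact hpos i j
          · exact le_rfl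
  · intro u
    match u with
    | none =>
      rw [sinkOutSum _ hZ, sinkInSum _ hZ hn]
      have hv' : ∀ j : Fin (m+1),
          Phi v (some ((⟨n-1, by omega⟩ : Fin n), j)) none = v ⟨n-1, by omega⟩ j := by
        intro j; rw [Phi, if_pos rfl]
      rw [Finset.sum_congr rfl fun j _ => hv' j, hsum]
      show (0:ℝ) - 1 = -∑ i : Fin n, (((1:ℕ):ℝ) - ((if (i:ℕ)=0 then 0 else 1 : ℕ):ℝ))
      rw [sum_eq_one_term' _ (⟨0, hn⟩ : Fin n)]
      · norm_num
      · intro c hc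
        rw [if_neg (fun h => hc (Fin.ext h))]
        norm_num
    | some (i,j) =>
      rw [outSum _ hZ i j, inSum _ hZ i j, Psi_Phi, hnet i j]
      by_cases hj0 : (j:ℕ) = 0
      · have hjm : (j:ℕ) < m := by omega
        rw [dif_pos hjm, Phi_hor v i j hjm, dif_neg (show ¬ 0 < (j:ℕ) by omega),
            if_pos hj0, if_neg (show ¬ (j:ℕ) = m by omega)]
        simp only [Hval, Pprev]
        rw [PV_zero v i j hj0]
        by_cases hi0 : 0 < (i:ℕ)
        · rw [dif_pos hi0, dif_pos hi0, Phi_vert_in v i j hi0, PV_zero v _ j hj0]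
          ring
        · rw [dif_neg hi0, dif_neg hi0]
          ring
      · by_cases hjm : (j:ℕ) = m
        · have h0j : 0 < (j:ℕ) := by omega
          rw [dif_neg (show ¬ (j:ℕ) < m by omega), dif_pos h0j, Phi_hor_in v i j h0j,
              if_neg hj0, if_pos hjm]
          simp only [Hval, Pprev]
          have e1 : PV v i ⟨(j:ℕ)-1, lt_of_le_of_lt (Nat.sub_le _ _) j.isLt⟩ = 1 - v i j := by
            have h := PV_pred v i j h0j
            rw [PV_top v i j hjm, hsum i] at h
            linarith
          rw [e1]
          by_cases hi0 : 0 < (i:ℕ)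
          · have e2 : PV v ⟨(i:ℕ)-1, lt_of_le_of_lt (Nat.sub_le _ _) i.isLt⟩
                ⟨(j:ℕ)-1, lt_of_le_of_lt (Nat.sub_le _ _) j.isLt⟩ =
                1 - v ⟨(i:ℕ)-1, lt_of_le_of_lt (Nat.sub_le _ _) i.isLt⟩ j := by
              have h := PV_pred v ⟨(i:ℕ)-1, lt_of_le_of_lt (Nat.sub_le _ _) i.isLt⟩ j h0j
              rw [PV_top v _ j hjm, hsum _] at h
              linarith
            rw [dif_pos hi0, dif_pos hi0, Phi_vert_in v i j hi0, e2,
                if_neg (show ¬(i:ℕ)=0 by omega)]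
            ring
          · rw [dif_neg hi0, dif_neg hi0, if_pos (show (i:ℕ)=0 by omega)]
            ring
        · have h0j : 0 < (j:ℕ) := by omega
          have hjltm : (j:ℕ) < m := by have := j.isLt; omega
          rw [dif_pos hjltm, Phi_hor v i j hjltm, dif_pos h0j, Phi_hor_in v i j h0j,
              if_neg hj0, if_neg hjm]
          simp only [Hval, Pprev]
          have ej := PV_pred v i j h0j
          by_cases hi0 : 0 < (i:ℕ)
          · have ej' := PV_pred v ⟨(i:ℕ)-1, lt_of_le_of_lt (Nat.sub_le _ _) i.isLt⟩ j h0j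
            rw [dif_pos hi0, dif_pos hi0, dif_pos hi0, Phi_vert_in v i j hi0, ej, ej']
            ring
          · rw [dif_neg hi0, dif_neg hi0, dif_neg hi0, ej]
            ring

lemma netflow_some (i : Fin n) (j : Fin (m+1)) :
    netflow n m (fun _ => 1) (fun i : Fin n => if (i:ℕ)=0 then 0 else 1) (some (i,j)) =
    (if (j:ℕ)=0 then (1:ℝ) else 0) -
      (if (j:ℕ)=m then (if (i:ℕ)=0 then (0:ℝ) else 1) else 0) := by
  show (if (j:ℕ)=0 then ((1:ℕ):ℝ) else 0) -
      (if (j:ℕ)=m then ((if (i:ℕ)=0 then 0 else 1 : ℕ):ℝ) else 0) = _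
  congr 1
  · norm_num
  · split_ifs <;> norm_num

lemma up_eq (f : Vtx n m → Vtx n m → ℝ) (i : Fin n) (j : Fin (m+1)) (hi : 0 < (i:ℕ)) :
    f (some (⟨(i:ℕ)-1, lt_of_le_of_lt (Nat.sub_le _ _) i.isLt⟩, j)) (some (i,j)) =
      Psi f ⟨(i:ℕ)-1, lt_of_le_of_lt (Nat.sub_le _ _) i.isLt⟩ j := by
  have h' : (i:ℕ)-1+1 < n := by have := i.isLt; omega
  rw [Psi, dif_pos h']
  have e : (⟨(i:ℕ)-1+1, h'⟩ : Fin n) = i := Fin.ext (show (i:ℕ)-1+1 = (i:ℕ) by omega)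
  rw [e]

lemma tele (f : Vtx n m → Vtx n m → ℝ) (i : Fin n) :
    ∑ j : Fin (m+1),
      (if h : (j:ℕ) < m then f (some (i,j)) (some (i, ⟨(j:ℕ)+1, Nat.succ_lt_succ h⟩)) else 0) =
    ∑ j : Fin (m+1), (if h : 0 < (j:ℕ) then
      f (some (i, ⟨(j:ℕ)-1, lt_of_le_of_lt (Nat.sub_le _ _) j.isLt⟩)) (some (i,j)) else 0) := by
  rw [Fin.sum_univ_castSucc, Fin.sum_univ_succ]
  rw [dif_neg (show ¬ ((Fin.last m : Fin (m+1)):ℕ) < m by simp),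
      dif_neg (show ¬ 0 < ((0 : Fin (m+1)):ℕ) by simp)]
  rw [add_zero, zero_add]
  apply Finset.sum_congr rfl
  intro k _
  have c1 : ((k.castSucc : Fin (m+1)):ℕ) < m := by simp
  have c2 : 0 < ((k.succ : Fin (m+1)):ℕ) := by simp
  rw [dif_pos c1, dif_pos c2]
  apply congrArg₂ (fun a b => f (some (i, a)) (some (i, b)))
  · apply Fin.ext
    show (k:ℕ) = (k:ℕ)+1-1
    omega
  · apply Fin.ext
    show (k:ℕ)+1 = (k:ℕ)+1
    rfl

lemma vertSum (f : Vtx n m → Vtx n m → ℝ) (i : Fin n) :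
    ∑ j : Fin (m+1), (if h : 0 < (i:ℕ) then
      f (some (⟨(i:ℕ)-1, lt_of_le_of_lt (Nat.sub_le _ _) i.isLt⟩, j)) (some (i,j)) else 0) =
    (if h : 0 < (i:ℕ) then
      ∑ j, Psi f ⟨(i:ℕ)-1, lt_of_le_of_lt (Nat.sub_le _ _) i.isLt⟩ j else 0) := by
  by_cases hi0 : 0 < (i:ℕ)
  · simp only [dif_pos hi0]
    exact Finset.sum_congr rfl fun j _ => up_eq f i j hi0
  · simp only [dif_neg hi0, Finset.sum_const_zero]

lemma netSum (hm : 0 < m) (i : Fin n) :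
    ∑ j : Fin (m+1),
      netflow n m (fun _ => 1) (fun i : Fin n => if (i:ℕ)=0 then 0 else 1) (some (i,j)) =
    (if (i:ℕ)=0 then (1:ℝ) else 0) := by
  rw [Finset.sum_congr rfl (fun j _ => netflow_some i j), Finset.sum_sub_distrib]
  have h1 : ∑ j : Fin (m+1), (if (j:ℕ)=0 then (1:ℝ) else 0) = 1 := by
    rw [sum_eq_one_term' _ (⟨0, by omega⟩ : Fin (m+1))]
    · rw [if_pos rfl]
    · intro c hc; exact if_neg (fun h => hc (Fin.ext h))
  have h2 : ∑ j : Fin (m+1), (if (j:ℕ)=m then (if (i:ℕ)=0 then (0:ℝ) else 1) else 0) =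
      (if (i:ℕ)=0 then (0:ℝ) else 1) := by
    rw [sum_eq_one_term' _ (⟨m, by omega⟩ : Fin (m+1))]
    · rw [if_pos rfl]
    · intro c hc; exact if_neg (fun h => hc (Fin.ext h))
  rw [h1, h2]
  split_ifs <;> norm_num

lemma rowsum (hn : 0 < n) (hm : 0 < m) {f : Vtx n m → Vtx n m → ℝ}
    (hf : f ∈ FlowPolytope n m (fun _ => 1) (fun i : Fin n => if (i:ℕ)=0 then 0 else 1)) :
    ∀ i : Fin n, ∑ j, Psi f i j = 1 := by
  obtain ⟨hZ, hpos, hcons⟩ := hf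
  have main : ∀ i : Fin n, (∑ j, Psi f i j) -
      (if h : 0 < (i:ℕ) then
        ∑ j, Psi f ⟨(i:ℕ)-1, lt_of_le_of_lt (Nat.sub_le _ _) i.isLt⟩ j else 0) =
      (if (i:ℕ)=0 then (1:ℝ) else 0) := by
    intro i
    have H : ∑ j : Fin (m+1), ((∑ w, f (some (i,j)) w) - (∑ w, f w (some (i,j)))) =
        ∑ j : Fin (m+1),
          netflow n m (fun _ => 1) (fun i : Fin n => if (i:ℕ)=0 then 0 else 1) (some (i,j)) :=
      Finset.sum_congr rfl fun j _ => hcons (some (i,j))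
    rw [netSum hm i] at H
    rw [Finset.sum_congr rfl (fun j _ => by rw [outSum f hZ i j, inSum f hZ i j])] at H
    rw [Finset.sum_sub_distrib, Finset.sum_add_distrib, Finset.sum_add_distrib,
        tele f i, vertSum f i] at H
    linarith [H]
  have key : ∀ t : ℕ, ∀ i : Fin n, (i:ℕ) = t → ∑ j, Psi f i j = 1 := by
    intro t
    induction t with
    | zero =>
      intro i hi
      have h := main i
      rw [dif_neg (by omega), if_pos hi] at h
      linarith
    | succ t IH =>
      intro i hi
      have h := main i
      rw [dif_pos (show 0 < (i:ℕ) by omega), if_neg (by omega)] at h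
      have e := IH ⟨(i:ℕ)-1, lt_of_le_of_lt (Nat.sub_le _ _) i.isLt⟩ (show (i:ℕ)-1 = t by omega)
      linarith
  exact fun i => key (i:ℕ) i rfl

lemma horEq (hm : 0 < m) {f : Vtx n m → Vtx n m → ℝ}
    (hf : f ∈ FlowPolytope n m (fun _ => 1) (fun i : Fin n => if (i:ℕ)=0 then 0 else 1)) :
    ∀ (t : ℕ) (i : Fin n) (j : Fin (m+1)), (j:ℕ) = t → ∀ (hjm : (j:ℕ) < m),
      f (some (i,j)) (some (i, ⟨(j:ℕ)+1, Nat.succ_lt_succ hjm⟩)) = Hval (Psi f) i j := by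
  obtain ⟨hZ, hpos, hcons⟩ := hf
  intro t
  induction t with
  | zero =>
    intro i j hj0 hjm
    have hc := hcons (some (i,j))
    rw [outSum f hZ i j, inSum f hZ i j, netflow_some i j,
        dif_pos hjm, dif_neg (show ¬ 0 < (j:ℕ) by omega), if_pos hj0,
        if_neg (show ¬ (j:ℕ) = m by omega)] at hc
    rw [Hval, Pprev, PV_zero _ i j hj0]
    by_cases hi0 : 0 < (i:ℕ)
    · rw [dif_pos hi0, up_eq f i j hi0] at hc
      rw [dif_pos hi0, PV_zero _ _ j hj0]
      linarith
    · rw [dif_neg hi0] at hc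
      rw [dif_neg hi0]
      linarith
  | succ t IH =>
    intro i j hjt hjm
    have h0j : 0 < (j:ℕ) := by omega
    have hc := hcons (some (i,j))
    rw [outSum f hZ i j, inSum f hZ i j, netflow_some i j,
        dif_pos hjm, dif_pos h0j, if_neg (by omega), if_neg (by omega)] at hc
    have hj'lt : (j:ℕ)-1 < m+1 := lt_of_le_of_lt (Nat.sub_le _ _) j.isLt
    have hj'm : (((⟨(j:ℕ)-1, hj'lt⟩ : Fin (m+1))):ℕ) < m := by show (j:ℕ)-1 < m; omega
    have eIH := IH i ⟨(j:ℕ)-1, hj'lt⟩ (show (j:ℕ)-1 = t by omega) hj'm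
    have ecast : (⟨(((⟨(j:ℕ)-1, hj'lt⟩ : Fin (m+1))):ℕ)+1, Nat.succ_lt_succ hj'm⟩ : Fin (m+1)) = j :=
      Fin.ext (show (j:ℕ)-1+1 = (j:ℕ) by omega)
    rw [ecast] at eIH
    rw [eIH] at hc
    have epv := PV_pred (Psi f) i j h0j
    by_cases hi0 : 0 < (i:ℕ)
    · rw [dif_pos hi0, up_eq f i j hi0] at hc
      have epv' := PV_pred (Psi f) ⟨(i:ℕ)-1, lt_of_le_of_lt (Nat.sub_le _ _) i.isLt⟩ j h0j
      simp only [Hval, Pprev, dif_pos hi0] at hc ⊢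
      linarith [epv, epv']
    · rw [dif_neg hi0] at hc
      simp only [Hval, Pprev, dif_neg hi0] at hc ⊢
      linarith [epv]

lemma Phi_Psi (hn : 0 < n) (hm : 0 < m) {f : Vtx n m → Vtx n m → ℝ}
    (hf : f ∈ FlowPolytope n m (fun _ => 1) (fun i : Fin n => if (i:ℕ)=0 then 0 else 1)) :
    Phi (Psi f) = f := by
  have hZ := hf.1
  funext u w
  match u, w with
  | none, w => exact (hZ none w (fun h => h)).symm
  | some (i,j), none =>
    by_cases hi : (i:ℕ) = n-1
    · rw [Phi, if_pos hi, Psi, dif_neg (show ¬(i:ℕ)+1 < n by have := i.isLt; omega)]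
    · rw [Phi, if_neg hi]
      exact (hZ (some (i,j)) none (fun h => hi h)).symm
  | some (i,j), some (i',j') =>
    rw [Phi]
    split_ifs with h1 h2
    · obtain ⟨h1a, h1b⟩ := h1
      have hjm : (j:ℕ) < m := by have := j'.isLt; omega
      have e1 : i' = i := Fin.ext h1a
      have e2 : j' = ⟨(j:ℕ)+1, Nat.succ_lt_succ hjm⟩ := Fin.ext h1b
      rw [e1, e2]
      exact (horEq hm hf (j:ℕ) i j rfl hjm).symm
    · obtain ⟨h2a, h2b⟩ := h2
      have hi : (i:ℕ)+1 < n := by have := i'.isLt; omega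
      have e1 : i' = ⟨(i:ℕ)+1, hi⟩ := Fin.ext h2a
      have e2 : j' = j := Fin.ext h2b
      rw [e1, e2, Psi, dif_pos hi]
    · refine (hZ _ _ ?_).symm
      rintro (⟨rfl, hb⟩ | ⟨ha, rfl⟩)
      · exact h1 ⟨rfl, hb⟩
      · exact h2 ⟨ha, rfl⟩

lemma Phi_mid {v v1 v2 : Fin n → Fin (m+1) → ℝ}
    (h : ∀ i j, v i j = 2⁻¹ * (v1 i j + v2 i j)) :
    ∀ u w, Phi v u w = 2⁻¹ * (Phi v1 u w + Phi v2 u w) := by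
  have hPV : ∀ i j, PV v i j = 2⁻¹ * (PV v1 i j + PV v2 i j) := by
    intro i j
    rw [PV, PV, PV, ← Finset.sum_add_distrib, Finset.mul_sum]
    apply Finset.sum_congr rfl
    intro k _
    split_ifs
    · exact h i k
    · ring
  have hH : ∀ i j, Hval v i j = 2⁻¹ * (Hval v1 i j + Hval v2 i j) := by
    intro i j
    rw [Hval, Hval, Hval, Pprev, Pprev, Pprev]
    split_ifs with hi0
    · rw [hPV, hPV]; ring
    · rw [hPV]; ring
  intro u w
  match u, w with
  | none, w =>
    show (0:ℝ) = 2⁻¹ * ((0:ℝ) + (0:ℝ))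
    norm_num
  | some (i,j), none =>
    rw [Phi, Phi, Phi]
    split_ifs
    · exact h i j
    · norm_num
  | some (i,j), some (i',j') =>
    rw [Phi, Phi, Phi]
    split_ifs with c1 c2
    · exact hH i j
    · exact h i j
    · norm_num

lemma Psi_smul_add (y z : Vtx n m → Vtx n m → ℝ) (i : Fin n) (j : Fin (m+1)) :
    Psi ((2⁻¹ : ℝ) • (y + z)) i j = 2⁻¹ * (Psi y i j + Psi z i j) := by
  rw [Psi, Psi, Psi]
  split_ifs <;> simp [Pi.smul_apply, Pi.add_apply, smul_eq_mul]

def unitv (n m : ℕ) (c : Fin n → Fin (m+1)) : Fin n → Fin (m+1) → ℝ :=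
  fun i j => if j = c i then 1 else 0

def Fmap (n m : ℕ) (c : Fin n → Fin (m+1)) : Vtx n m → Vtx n m → ℝ := Phi (unitv n m c)

lemma unitv_mem (c : Fin n → Fin (m+1)) : unitv n m c ∈ Qset n m := by
  constructor
  · intro i j
    show (0:ℝ) ≤ if j = c i then 1 else 0
    split <;> norm_num
  · intro i
    show ∑ j : Fin (m+1), (if j = c i then (1:ℝ) else 0) = 1
    rw [sum_eq_one_term' _ (c i) (fun d hd => if_neg hd), if_pos rfl]

lemma Psi_F (c : Fin n → Fin (m+1)) (i : Fin n) (j : Fin (m+1)) :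
    Psi (Fmap n m c) i j = (if j = c i then (1:ℝ) else 0) :=
  Psi_Phi (unitv n m c) i j

lemma Psi_nonneg_of_mem {f : Vtx n m → Vtx n m → ℝ}
    (hf : f ∈ FlowPolytope n m (fun _ => 1) (fun i : Fin n => if (i:ℕ)=0 then 0 else 1))
    (i : Fin n) (j : Fin (m+1)) : 0 ≤ Psi f i j := by
  rw [Psi]; split <;> exact hf.2.1 _ _

lemma Fmap_extreme (hn : 0 < n) (hm : 0 < m) (c : Fin n → Fin (m+1)) :
    IsExtremePt
      (FlowPolytope n m (fun _ => 1) (fun i : Fin n => if (i:ℕ)=0 then 0 else 1))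
      (Fmap n m c) := by
  refine ⟨memP hn hm (unitv_mem c), ?_⟩
  intro y hy z hz hmid
  have hyz : ∀ (i : Fin n) (j : Fin (m+1)),
      (if j = c i then (1:ℝ) else 0) = 2⁻¹ * (Psi y i j + Psi z i j) := by
    intro i j
    rw [← Psi_F c i j, show Fmap n m c = (2⁻¹:ℝ) • (y + z) from hmid, Psi_smul_add]
  have hzero : ∀ i j, j ≠ c i → Psi y i j = 0 ∧ Psi z i j = 0 := by
    intro i j hj
    have h := hyz i j
    rw [if_neg hj] at h
    have hy0 := Psi_nonneg_of_mem hy i j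
    have hz0 := Psi_nonneg_of_mem hz i j
    constructor <;> linarith
  have hyu : Psi y = unitv n m c := by
    funext i j
    show Psi y i j = if j = c i then (1:ℝ) else 0
    by_cases hj : j = c i
    · rw [if_pos hj]
      have hsy := rowsum hn hm hy i
      rw [sum_eq_one_term' _ (c i) (fun d hd => (hzero i d hd).1)] at hsy
      rw [hj]; exact hsy
    · rw [if_neg hj]; exact (hzero i j hj).1
  have hzu : Psi z = unitv n m c := by
    funext i j
    show Psi z i j = if j = c i then (1:ℝ) else 0
    by_cases hj : j = c i
    · rw [if_pos hj]
      have hsz := rowsum hn hm hz i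
      rw [sum_eq_one_term' _ (c i) (fun d hd => (hzero i d hd).2)] at hsz
      rw [hj]; exact hsz
    · rw [if_neg hj]; exact (hzero i j hj).2
  calc y = Phi (Psi y) := (Phi_Psi hn hm hy).symm
    _ = Phi (Psi z) := by rw [hyu, hzu]
    _ = z := Phi_Psi hn hm hz

lemma extreme_eq_F (hn : 0 < n) (hm : 0 < m) {f : Vtx n m → Vtx n m → ℝ}
    (hf : IsExtremePt
      (FlowPolytope n m (fun _ => 1) (fun i : Fin n => if (i:ℕ)=0 then 0 else 1)) f) :
    ∃ c, f = Fmap n m c := by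
  obtain ⟨hfP, hmid⟩ := hf
  have hnn : ∀ i j, 0 ≤ Psi f i j := Psi_nonneg_of_mem hfP
  have hrs := rowsum hn hm hfP
  have honepos : ∀ (i : Fin n) (p q : Fin (m+1)), 0 < Psi f i p → 0 < Psi f i q → p = q := by
    intro i p q hp hq
    by_contra hpq
    set ε := min (Psi f i p) (Psi f i q) with hεdef
    have hε0 : 0 < ε := lt_min hp hq
    have hεp : ε ≤ Psi f i p := min_le_left _ _
    have hεq : ε ≤ Psi f i q := min_le_right _ _
    set v1 : Fin n → Fin (m+1) → ℝ := fun a b => Psi f a b +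
      ((if a = i ∧ b = p then ε else 0) - (if a = i ∧ b = q then ε else 0)) with hv1
    set v2 : Fin n → Fin (m+1) → ℝ := fun a b => Psi f a b -
      ((if a = i ∧ b = p then ε else 0) - (if a = i ∧ b = q then ε else 0)) with hv2
    have hmidv : ∀ a b, Psi f a b = 2⁻¹ * (v1 a b + v2 a b) := by
      intro a b
      simp only [hv1, hv2]
      ring
    have esum : ∀ a : Fin n,
        (∑ b : Fin (m+1), ((if a = i ∧ b = p then ε else 0) - (if a = i ∧ b = q then ε else 0)))
        = 0 := by
      intro a
      rw [Finset.sum_sub_distrib]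
      have e1 : ∑ b : Fin (m+1), (if a = i ∧ b = p then ε else 0) =
          if a = i then ε else 0 := by
        by_cases hai : a = i <;> simp [hai]
      have e2 : ∑ b : Fin (m+1), (if a = i ∧ b = q then ε else 0) =
          if a = i then ε else 0 := by
        by_cases hai : a = i <;> simp [hai]
      rw [e1, e2, sub_self]
    have hQ1 : v1 ∈ Qset n m := by
      constructor
      · intro a b
        simp only [hv1]
        by_cases hai : a = i
        · by_cases hbp : b = p
          · rw [if_pos ⟨hai, hbp⟩, if_neg (by rintro ⟨_, h⟩; exact hpq (hbp.symm.trans h))]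
            linarith [hnn a b]
          · by_cases hbq : b = q
            · rw [if_neg (by rintro ⟨_, h⟩; exact hbp h), if_pos ⟨hai, hbq⟩]
              have hq' : ε ≤ Psi f a b := by rw [hai, hbq]; exact hεq
              linarith
            · rw [if_neg (by rintro ⟨_, h⟩; exact hbp h),
                  if_neg (by rintro ⟨_, h⟩; exact hbq h)]
              linarith [hnn a b]
        · rw [if_neg (by rintro ⟨h, _⟩; exact hai h), if_neg (by rintro ⟨h, _⟩; exact hai h)]
          linarith [hnn a b]
      · intro a
        simp only [hv1]
        rw [Finset.sum_add_distrib, hrs a, esum a, add_zero]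
    have hQ2 : v2 ∈ Qset n m := by
      constructor
      · intro a b
        simp only [hv2]
        by_cases hai : a = i
        · by_cases hbp : b = p
          · rw [if_pos ⟨hai, hbp⟩, if_neg (by rintro ⟨_, h⟩; exact hpq (hbp.symm.trans h))]
            have hp' : ε ≤ Psi f a b := by rw [hai, hbp]; exact hεp
            linarith
          · by_cases hbq : b = q
            · rw [if_neg (by rintro ⟨_, h⟩; exact hbp h), if_pos ⟨hai, hbq⟩]
              linarith [hnn a b]
            · rw [if_neg (by rintro ⟨_, h⟩; exact hbp h),
                  if_neg (by rintro ⟨_, h⟩; exact hbq h)]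
              linarith [hnn a b]
        · rw [if_neg (by rintro ⟨h, _⟩; exact hai h), if_neg (by rintro ⟨h, _⟩; exact hai h)]
          linarith [hnn a b]
      · intro a
        simp only [hv2]
        rw [Finset.sum_sub_distrib, hrs a, esum a, sub_zero]
    have hy := memP hn hm hQ1
    have hz := memP hn hm hQ2
    have hfm : f = (2⁻¹:ℝ) • (Phi v1 + Phi v2) := by
      funext u w
      have h' := Phi_mid hmidv u w
      rw [Phi_Psi hn hm hfP] at h'
      rw [h']
      simp [Pi.smul_apply, Pi.add_apply, smul_eq_mul]
    have heq := hmid (Phi v1) hy (Phi v2) hz hfm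
    have h1 : v1 i p = v2 i p := by rw [← Psi_Phi v1 i p, ← Psi_Phi v2 i p, heq]
    have e1 : v1 i p = Psi f i p + ε := by
      show Psi f i p +
        ((if i = i ∧ p = p then ε else 0) - (if i = i ∧ p = q then ε else 0)) = Psi f i p + ε
      rw [if_pos ⟨rfl, rfl⟩, if_neg (by rintro ⟨_, h⟩; exact hpq h)]
      ring
    have e2 : v2 i p = Psi f i p - ε := by
      show Psi f i p -
        ((if i = i ∧ p = p then ε else 0) - (if i = i ∧ p = q then ε else 0)) = Psi f i p - ε
      rw [if_pos ⟨rfl, rfl⟩, if_neg (by rintro ⟨_, h⟩; exact hpq h)]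
      ring
    rw [e1, e2] at h1
    linarith
  have hexists : ∀ i : Fin n, ∃ j0 : Fin (m+1), ∀ j, Psi f i j = if j = j0 then 1 else 0 := by
    intro i
    have hne : ∃ j0, Psi f i j0 ≠ 0 := by
      by_contra hno
      push_neg at hno
      have h := hrs i
      rw [Finset.sum_congr rfl (fun j _ => hno j)] at h
      simp at h
    obtain ⟨j0, hj0⟩ := hne
    have hj0pos : 0 < Psi f i j0 := lt_of_le_of_ne (hnn i j0) (Ne.symm hj0)
    refine ⟨j0, fun j => ?_⟩
    by_cases hj : j = j0
    · rw [if_pos hj]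
      have hsum : ∑ j', Psi f i j' = Psi f i j0 := by
        apply sum_eq_one_term'
        intro d hd
        by_contra hd0
        exact hd (honepos i d j0 (lt_of_le_of_ne (hnn i d) (Ne.symm hd0)) hj0pos)
      rw [hj, ← hsum]
      exact hrs i
    · rw [if_neg hj]
      by_contra h0
      exact hj (honepos i j j0 (lt_of_le_of_ne (hnn i j) (Ne.symm h0)) hj0pos)
  choose c hc using hexists
  refine ⟨c, ?_⟩
  have hu : unitv n m c = Psi f := by
    funext i j
    show (if j = c i then (1:ℝ) else 0) = Psi f i j
    exact (hc i j).symm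
  show f = Phi (unitv n m c)
  rw [hu, Phi_Psi hn hm hfP]

end
end GPS

namespace GPS

/-- For `a = (1,…,1)` and `b = (0,1,…,1)`, the flow polytope
`F_{G(n,m)}(a,b)` has exactly `(m+1)^n` extreme points. -/
theorem statement19 (n m : ℕ) (hn : 0 < n) (hm : 0 < m) :
    numVertices n m (fun _ => 1) (fun i => if (i : ℕ) = 0 then 0 else 1) =
      (m + 1) ^ n := by
  have hset : {f | IsExtremePt
      (FlowPolytope n m (fun _ => 1) (fun i => if (i : ℕ) = 0 then 0 else 1)) f} =
      Set.range (Fmap n m) := by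
    ext f
    constructor
    · intro hf
      obtain ⟨c, rfl⟩ := extreme_eq_F hn hm hf
      exact ⟨c, rfl⟩
    · rintro ⟨c, rfl⟩
      exact Fmap_extreme hn hm c
  have hinj : Function.Injective (Fmap n m) := by
    intro c d hcd
    funext i
    have h := congrArg (fun g => Psi g i (c i)) hcd
    rw [Psi_F c i (c i), Psi_F d i (c i), if_pos rfl] at h
    by_contra hne
    rw [if_neg hne] at h
    norm_num at h
  rw [numVertices, hset, ← Set.image_univ, Set.ncard_image_of_injective _ hinj,
      Set.ncard_univ, Nat.card_eq_fintype_card, Fintype.card_fun, Fintype.card_fin,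
      Fintype.card_fin]

end GPS
end
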